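/- arXiv:2506.10362 — 6 statements merged into one kernel-verified Lean document; each statement's English description precedes it below -/
import Mathlib

section
/- (Exactness of the penalized problem.) Let W be a symmetric real N×N matrix and let ρ > max(2λ_max(W), 0). Define F(X;ρ) = Tr(X (W − (ρ/2)I) Xᵀ) + Nρ/2. Then a matrix X* ∈ Δ_k^N minimizes F(·;ρ) over Δ_k^N if and only if every column of X* is a standard basis vector of ℝ^k and X* minimizes the function X ↦ Tr(X W Xᵀ) over the set of all k×N matrices whose columns are standard basis vectors. -/
open Matrix

section Aux

open Finset

noncomputable def qf {k N : ℕ} (M : Matrix (Fin N) (Fin N) ℝ)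
    (X : Matrix (Fin k) (Fin N) ℝ) : ℝ :=
  ∑ a, ∑ b, M a b * ∑ i, X i a * X i b

theorem trace_eq_qf {k N : ℕ} (M : Matrix (Fin N) (Fin N) ℝ) (X : Matrix (Fin k) (Fin N) ℝ) :
    Matrix.trace (X * M * Xᵀ) = qf M X := by
  unfold qf
  simp only [Matrix.trace, Matrix.diag, Matrix.mul_apply, Matrix.transpose_apply,
    Finset.sum_mul, Finset.mul_sum]
  rw [show (∑ i : Fin k, ∑ b : Fin N, ∑ a : Fin N, X i a * M a b * X i b)
      = ∑ i : Fin k, ∑ a : Fin N, ∑ b : Fin N, X i a * M a b * X i b from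
    Finset.sum_congr rfl fun i _ => Finset.sum_comm, Finset.sum_comm]
  refine Finset.sum_congr rfl fun a _ => ?_
  rw [Finset.sum_comm]
  exact Finset.sum_congr rfl fun b _ => Finset.sum_congr rfl fun i _ => by ring

theorem diag_le_sup {N : ℕ} (W : Matrix (Fin N) (Fin N) ℝ) (hW : W.IsHermitian) (j : Fin N) :
    W j j ≤ ⨆ i, hW.eigenvalues i := by
  have hU := (Matrix.mem_unitaryGroup_iff).mp (hW.eigenvectorUnitary).2
  have hrow : ∑ m, (hW.eigenvectorBasis m j) * (hW.eigenvectorBasis m j) = 1 := by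
    have := congrFun (congrFun hU j) j
    simpa [Matrix.mul_apply, Matrix.one_apply, star,
      Matrix.IsHermitian.eigenvectorUnitary_apply] using this
  have hjj : W j j = ∑ m, hW.eigenvalues m *
      ((hW.eigenvectorBasis m j) * (hW.eigenvectorBasis m j)) := by
    conv_lhs => rw [hW.spectral_theorem]
    simp [Matrix.mul_apply, Matrix.diagonal_apply, star, Finset.sum_mul]
    exact Finset.sum_congr rfl fun m _ => by ring
  rw [hjj]
  have hb : ∀ m, hW.eigenvalues m ≤ ⨆ i, hW.eigenvalues i := fun m =>
    le_ciSup (Set.Finite.bddAbove (Set.finite_range _)) m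
  calc ∑ m, hW.eigenvalues m * ((hW.eigenvectorBasis m j) * (hW.eigenvectorBasis m j))
      ≤ ∑ m, (⨆ i, hW.eigenvalues i) * ((hW.eigenvectorBasis m j) * (hW.eigenvectorBasis m j)) := by
        refine Finset.sum_le_sum fun m _ => ?_
        exact mul_le_mul_of_nonneg_right (hb m) (mul_self_nonneg _)
    _ = ⨆ i, hW.eigenvalues i := by rw [← Finset.mul_sum, hrow, mul_one]

theorem qf_update {k N : ℕ} (M : Matrix (Fin N) (Fin N) ℝ) (X : Matrix (Fin k) (Fin N) ℝ)
    (j : Fin N) (v : Fin k → ℝ) :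
    qf M (X.updateCol j v) =
      M j j * (∑ i, v i * v i)
      + ∑ i, v i * (∑ b ∈ Finset.univ.erase j, (M j b + M b j) * X i b)
      + ∑ a ∈ Finset.univ.erase j, ∑ b ∈ Finset.univ.erase j, M a b * ∑ i, X i a * X i b := by
  have hsplit : ∀ g : Fin N → ℝ, ∑ b, g b = g j + ∑ b ∈ Finset.univ.erase j, g b :=
    fun g => (Finset.add_sum_erase _ g (Finset.mem_univ j)).symm
  unfold qf
  simp only [hsplit]
  have e1 : (∑ i, X.updateCol j v i j * X.updateCol j v i j) = ∑ i, v i * v i := by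
    simp [Matrix.updateCol_apply]
  have e2 : ∀ b ∈ Finset.univ.erase j,
      M j b * (∑ i, X.updateCol j v i j * X.updateCol j v i b)
        = M j b * ∑ i, v i * X i b := by
    intro b hb
    have hbj : b ≠ j := (Finset.mem_erase.mp hb).1
    simp [Matrix.updateCol_apply, hbj]
  have e3 : ∀ a ∈ Finset.univ.erase j,
      (M a j * (∑ i, X.updateCol j v i a * X.updateCol j v i j)
        + ∑ b ∈ Finset.univ.erase j, M a b * ∑ i, X.updateCol j v i a * X.updateCol j v i b)
      = (M a j * (∑ i, X i a * v i)
        + ∑ b ∈ Finset.univ.erase j, M a b * ∑ i, X i a * X i b) := by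
    intro a ha
    have haj : a ≠ j := (Finset.mem_erase.mp ha).1
    congr 1
    · simp [Matrix.updateCol_apply, haj]
    · refine Finset.sum_congr rfl fun b hb => ?_
      have hbj : b ≠ j := (Finset.mem_erase.mp hb).1
      simp [Matrix.updateCol_apply, haj, hbj]
  rw [e1, Finset.sum_congr rfl e2, Finset.sum_congr rfl e3, Finset.sum_add_distrib]
  have e4 : (∑ b ∈ Finset.univ.erase j, M j b * ∑ i, v i * X i b)
      + ∑ a ∈ Finset.univ.erase j, M a j * ∑ i, X i a * v i
      = ∑ i, v i * ∑ b ∈ Finset.univ.erase j, (M j b + M b j) * X i b := by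
    simp only [Finset.mul_sum]
    rw [Finset.sum_comm, Finset.sum_comm (s := Finset.univ.erase j)]
    rw [← Finset.sum_add_distrib]
    refine Finset.sum_congr rfl fun i _ => ?_
    rw [← Finset.sum_add_distrib]
    exact Finset.sum_congr rfl fun b _ => by ring
  linarith [e4]

theorem qf_update_single {k N : ℕ} (M : Matrix (Fin N) (Fin N) ℝ) (X : Matrix (Fin k) (Fin N) ℝ)
    (j : Fin N) (i0 : Fin k) :
    qf M (X.updateCol j (Pi.single i0 1)) =
      M j j + (∑ b ∈ Finset.univ.erase j, (M j b + M b j) * X i0 b)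
      + ∑ a ∈ Finset.univ.erase j, ∑ b ∈ Finset.univ.erase j, M a b * ∑ i, X i a * X i b := by
  rw [qf_update]
  congr 1
  congr 1
  · simp [Pi.single_apply]
  · simp [Pi.single_apply, ite_mul]

theorem exists_vertex_le {k N : ℕ} (M : Matrix (Fin N) (Fin N) ℝ) (X : Matrix (Fin k) (Fin N) ℝ)
    (j : Fin N) (v : Fin k → ℝ) (hv0 : ∀ i, 0 ≤ v i) (hv1 : ∑ i, v i = 1) :
    ∃ i0 : Fin k, qf M (X.updateCol j (Pi.single i0 1)) + M j j * ((∑ i, v i * v i) - 1)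
      ≤ qf M (X.updateCol j v) := by
  have hk : Nonempty (Fin k) := by
    by_contra h
    rw [not_nonempty_iff] at h
    simp [Finset.univ_eq_empty] at hv1
  obtain ⟨i0, -, hmin⟩ := Finset.exists_min_image Finset.univ
    (fun i => qf M (X.updateCol j (Pi.single i 1))) ⟨hk.some, Finset.mem_univ _⟩
  refine ⟨i0, ?_⟩
  have key : qf M (X.updateCol j v)
      = ∑ i, v i * qf M (X.updateCol j (Pi.single i 1)) + M j j * ((∑ i, v i * v i) - 1) := by
    rw [qf_update]
    simp only [qf_update_single]
    simp only [mul_add, Finset.sum_add_distrib, ← Finset.sum_mul, hv1]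
    ring
  rw [key]
  have : qf M (X.updateCol j (Pi.single i0 1))
      ≤ ∑ i, v i * qf M (X.updateCol j (Pi.single i 1)) := by
    calc qf M (X.updateCol j (Pi.single i0 1))
        = ∑ i, v i * qf M (X.updateCol j (Pi.single i0 1)) := by
          rw [← Finset.sum_mul, hv1, one_mul]
      _ ≤ _ := Finset.sum_le_sum fun i _ =>
          mul_le_mul_of_nonneg_left (hmin i (Finset.mem_univ i)) (hv0 i)
  linarith

theorem sq_sum_le {k : ℕ} (v : Fin k → ℝ) (h0 : ∀ i, 0 ≤ v i) (h1 : ∑ i, v i = 1) :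
    ∑ i, v i * v i ≤ 1 := by
  have hle : ∀ i, v i ≤ 1 := fun i => by
    calc v i ≤ ∑ i', v i' := Finset.single_le_sum (fun i' _ => h0 i') (Finset.mem_univ i)
    _ = 1 := h1
  calc ∑ i, v i * v i ≤ ∑ i, v i * 1 :=
        Finset.sum_le_sum fun i _ => mul_le_mul_of_nonneg_left (hle i) (h0 i)
    _ = 1 := by simpa using h1

theorem sq_sum_lt {k : ℕ} (v : Fin k → ℝ) (h0 : ∀ i, 0 ≤ v i) (h1 : ∑ i, v i = 1)
    (hns : ¬ ∃ i, v = Pi.single i 1) : ∑ i, v i * v i < 1 := by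
  have hle : ∀ i, v i ≤ 1 := fun i => by
    calc v i ≤ ∑ i', v i' := Finset.single_le_sum (fun i' _ => h0 i') (Finset.mem_univ i)
    _ = 1 := h1
  have hpos : ∃ i, 0 < v i := by
    by_contra h
    push_neg at h
    have : ∀ i, v i = 0 := fun i => le_antisymm (h i) (h0 i)
    simp [this] at h1
  obtain ⟨i, hi⟩ := hpos
  have hlt1 : v i < 1 := by
    rcases lt_or_eq_of_le (hle i) with h | h
    · exact h
    · exfalso
      apply hns
      refine ⟨i, funext fun i' => ?_⟩
      rcases eq_or_ne i' i with rfl | hne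
      · simp [h]
      · have hsum : ∑ i'' ∈ Finset.univ.erase i, v i'' = 0 := by
          have := Finset.add_sum_erase Finset.univ v (Finset.mem_univ i)
          rw [h1, h] at this
          linarith
        have := (Finset.sum_eq_zero_iff_of_nonneg (fun i'' _ => h0 i'')).mp hsum i'
          (Finset.mem_erase.mpr ⟨hne, Finset.mem_univ _⟩)
        simp [Pi.single_apply, hne, this]
  calc ∑ i', v i' * v i' < ∑ i', v i' * 1 := by
        refine Finset.sum_lt_sum (fun i' _ => mul_le_mul_of_nonneg_left (hle i') (h0 i'))
          ⟨i, Finset.mem_univ i, ?_⟩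
        exact mul_lt_mul_of_pos_left hlt1 hi
    _ = 1 := by simpa using h1

theorem qf_sub_smul_one {k N : ℕ} (W : Matrix (Fin N) (Fin N) ℝ) (c : ℝ)
    (X : Matrix (Fin k) (Fin N) ℝ) :
    qf (W - c • 1) X = qf W X - c * ∑ a, ∑ i, X i a * X i a := by
  unfold qf
  have : ∀ a, ∑ b, (W - c • 1) a b * ∑ i, X i a * X i b
      = (∑ b, W a b * ∑ i, X i a * X i b) - c * ∑ i, X i a * X i a := by
    intro a
    simp only [Matrix.sub_apply, Matrix.smul_apply, Matrix.one_apply, smul_eq_mul, mul_ite,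
      mul_one, mul_zero, sub_mul, ite_mul, zero_mul, Finset.sum_sub_distrib]
    congr 1
    simp [Finset.sum_ite_eq Finset.univ a]
  rw [Finset.sum_congr rfl (fun a _ => this a), Finset.sum_sub_distrib, Finset.mul_sum]

theorem binary_diag_sum {k N : ℕ} (X : Matrix (Fin k) (Fin N) ℝ)
    (hX : ∀ j, ∃ i, (fun a => X a j) = Pi.single i 1) :
    ∑ a, ∑ i, X i a * X i a = N := by
  rw [show (N : ℝ) = ∑ _a : Fin N, (1:ℝ) by simp]
  refine Finset.sum_congr rfl fun a _ => ?_
  obtain ⟨i, hi⟩ := hX a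
  have h2 := congrFun hi
  simp only [h2]
  simp [Pi.single_apply]

theorem binary_mem {k N : ℕ} (X : Matrix (Fin k) (Fin N) ℝ)
    (hX : ∀ j, ∃ i, (fun a => X a j) = Pi.single i 1) :
    (∀ i j, 0 ≤ X i j) ∧ ∀ j, ∑ i, X i j = 1 := by
  constructor
  · intro i j
    obtain ⟨i0, hi0⟩ := hX j
    have h2 := congrFun hi0 i
    rw [h2, Pi.single_apply]
    split <;> norm_num
  · intro j
    obtain ⟨i0, hi0⟩ := hX j
    have h2 := congrFun hi0
    calc ∑ i, X i j = ∑ i, Pi.single i0 (1:ℝ) i :=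
        Finset.sum_congr rfl fun i _ => h2 i
      _ = 1 := by simp [Pi.single_apply]

theorem round_aux {k N : ℕ} (M : Matrix (Fin N) (Fin N) ℝ) (hM : ∀ j, M j j ≤ 0)
    (X : Matrix (Fin k) (Fin N) ℝ) (hX0 : ∀ i j, 0 ≤ X i j) (hX1 : ∀ j, ∑ i, X i j = 1)
    (s : Finset (Fin N)) :
    ∃ X' : Matrix (Fin k) (Fin N) ℝ, (∀ i j, 0 ≤ X' i j) ∧ (∀ j, ∑ i, X' i j = 1) ∧
      (∀ j ∈ s, ∃ i, (fun a => X' a j) = Pi.single i 1) ∧ qf M X' ≤ qf M X := by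
  induction s using Finset.induction_on with
  | empty => exact ⟨X, hX0, hX1, by simp, le_refl _⟩
  | @insert a s ha ih =>
    obtain ⟨X', h0, h1, hb, hle⟩ := ih
    obtain ⟨i0, hi0⟩ := exists_vertex_le M X' a (fun i => X' i a) (fun i => h0 i a) (h1 a)
    rw [Matrix.updateCol_eq_self] at hi0
    have hsq : ∑ i, X' i a * X' i a ≤ 1 := sq_sum_le _ (fun i => h0 i a) (h1 a)
    have hprod : 0 ≤ M a a * ((∑ i, X' i a * X' i a) - 1) := by nlinarith [hM a]
    refine ⟨X'.updateCol a (Pi.single i0 1), ?_, ?_, ?_, by linarith⟩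
    · intro i b
      rw [Matrix.updateCol_apply]
      split
      · rw [Pi.single_apply]; split <;> norm_num
      · exact h0 i b
    · intro b
      by_cases hb' : b = a
      · subst hb'
        simp [Matrix.updateCol_apply, Pi.single_apply]
      · calc ∑ i, X'.updateCol a (Pi.single i0 1) i b = ∑ i, X' i b :=
            Finset.sum_congr rfl fun i _ => by rw [Matrix.updateCol_apply, if_neg hb']
          _ = 1 := h1 b
    · intro b hbmem
      rcases Finset.mem_insert.mp hbmem with rfl | hbs
      · refine ⟨i0, funext fun i => ?_⟩
        simp [Matrix.updateCol_apply]
      · obtain ⟨i1, hi1⟩ := hb b hbs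
        refine ⟨i1, funext fun i => ?_⟩
        have hba : b ≠ a := fun h => ha (h ▸ hbs)
        have h2 := congrFun hi1 i
        simpa [Matrix.updateCol_apply, hba] using h2

end Aux

/-- **Exactness of the penalized problem.** Let `W` be a symmetric real `N×N` matrix
and `ρ > max(2 λ_max(W), 0)`. Set `F(X;ρ) = Tr(X (W − (ρ/2)I) Xᵀ) + Nρ/2`. Then
`X* ∈ Δ_k^N` minimizes `F(·;ρ)` over `Δ_k^N` if and only if every column of `X*` is a
standard basis vector of `ℝ^k` and `X*` minimizes `X ↦ Tr(X W Xᵀ)` over the set of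
all `k×N` matrices whose columns are standard basis vectors. -/
theorem penalized_exactness (k N : ℕ) (W : Matrix (Fin N) (Fin N) ℝ)
    (hW : W.IsHermitian) (ρ : ℝ) (hρ : max (2 * ⨆ i, hW.eigenvalues i) 0 < ρ)
    (Xs : Matrix (Fin k) (Fin N) ℝ)
    (hXs : (∀ i j, 0 ≤ Xs i j) ∧ ∀ j, ∑ i, Xs i j = 1) :
    (∀ X : Matrix (Fin k) (Fin N) ℝ, (∀ i j, 0 ≤ X i j) → (∀ j, ∑ i, X i j = 1) →
        Matrix.trace (Xs * (W - (ρ / 2) • 1) * Xsᵀ) + N * ρ / 2 ≤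
          Matrix.trace (X * (W - (ρ / 2) • 1) * Xᵀ) + N * ρ / 2) ↔
      ((∀ j, ∃ i, (fun a => Xs a j) = Pi.single i 1) ∧
        ∀ X : Matrix (Fin k) (Fin N) ℝ,
          (∀ j, ∃ i, (fun a => X a j) = Pi.single i 1) →
            Matrix.trace (Xs * W * Xsᵀ) ≤ Matrix.trace (X * W * Xᵀ)) := by
  set M : Matrix (Fin N) (Fin N) ℝ := W - (ρ / 2) • 1 with hM
  have hMd : ∀ j : Fin N, M j j < 0 := by
    intro j
    have h1 : W j j ≤ ⨆ i, hW.eigenvalues i := diag_le_sup W hW j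
    have h2 : 2 * ⨆ i, hW.eigenvalues i < ρ := lt_of_le_of_lt (le_max_left _ _) hρ
    have h3 : M j j = W j j - ρ / 2 := by
      simp [hM, Matrix.sub_apply, Matrix.smul_apply, Matrix.one_apply]
    rw [h3]; linarith
  constructor
  · intro hmin
    have hbin : ∀ j, ∃ i, (fun a => Xs a j) = Pi.single i 1 := by
      intro j
      by_contra hns
      have hlt : ∑ i, Xs i j * Xs i j < 1 :=
        sq_sum_lt (fun i => Xs i j) (fun i => hXs.1 i j) (hXs.2 j) hns
      obtain ⟨i0, hi0⟩ := exists_vertex_le M Xs j (fun i => Xs i j)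
        (fun i => hXs.1 i j) (hXs.2 j)
      rw [Matrix.updateCol_eq_self] at hi0
      have hm0 : ∀ i b, 0 ≤ (Xs.updateCol j (Pi.single i0 1)) i b := by
        intro i b
        rw [Matrix.updateCol_apply]
        split
        · rw [Pi.single_apply]; split <;> norm_num
        · exact hXs.1 i b
      have hm1 : ∀ b, ∑ i, (Xs.updateCol j (Pi.single i0 1)) i b = 1 := by
        intro b
        by_cases hb' : b = j
        · subst hb'
          simp [Matrix.updateCol_apply, Pi.single_apply]
        · calc ∑ i, Xs.updateCol j (Pi.single i0 1) i b = ∑ i, Xs i b :=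
              Finset.sum_congr rfl fun i _ => by rw [Matrix.updateCol_apply, if_neg hb']
            _ = 1 := hXs.2 b
      have hcontra := hmin _ hm0 hm1
      rw [trace_eq_qf, trace_eq_qf] at hcontra
      have hp : 0 < M j j * ((∑ i, Xs i j * Xs i j) - 1) :=
        mul_pos_of_neg_of_neg (hMd j) (by linarith)
      linarith
    refine ⟨hbin, ?_⟩
    intro X hXb
    have hXmem := binary_mem X hXb
    have h := hmin X hXmem.1 hXmem.2
    rw [trace_eq_qf, trace_eq_qf] at h
    have e1 : qf M Xs = qf W Xs - ρ / 2 * N := by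
      rw [hM, qf_sub_smul_one, binary_diag_sum Xs hbin]
    have e2 : qf M X = qf W X - ρ / 2 * N := by
      rw [hM, qf_sub_smul_one, binary_diag_sum X hXb]
    rw [trace_eq_qf, trace_eq_qf]
    linarith
  · rintro ⟨hbin, hopt⟩
    intro X hX0 hX1
    obtain ⟨X', h0', h1', hbX', hleX'⟩ :=
      round_aux M (fun j => le_of_lt (hMd j)) X hX0 hX1 Finset.univ
    have hbin' : ∀ j, ∃ i, (fun a => X' a j) = Pi.single i 1 :=
      fun j => hbX' j (Finset.mem_univ j)
    have h1 : qf W Xs ≤ qf W X' := by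
      have := hopt X' hbin'
      rwa [trace_eq_qf, trace_eq_qf] at this
    have e1 : qf M Xs = qf W Xs - ρ / 2 * N := by
      rw [hM, qf_sub_smul_one, binary_diag_sum Xs hbin]
    have e2 : qf M X' = qf W X' - ρ / 2 * N := by
      rw [hM, qf_sub_smul_one, binary_diag_sum X' hbin']
    rw [trace_eq_qf, trace_eq_qf]
    linarith
end

section
/- Let W be a symmetric real N×N matrix and let ρ > max(2λ_max(W), 0). Define F(X;ρ) = Tr(X (W − (ρ/2)I) Xᵀ) + Nρ/2. If X* ∈ Δ_k^N minimizes F(·;ρ) over Δ_k^N, then every column of X* is a standard basis vector of ℝ^k. -/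
open Matrix

/-- Diagonal entries of a real symmetric matrix are bounded by the largest eigenvalue. -/
lemma diag_le_iSup_eigenvalues (N : ℕ) (W : Matrix (Fin N) (Fin N) ℝ) (hW : W.IsHermitian)
    (j : Fin N) : W j j ≤ ⨆ i, hW.eigenvalues i := by
  set U : Matrix (Fin N) (Fin N) ℝ := (hW.eigenvectorUnitary : Matrix (Fin N) (Fin N) ℝ) with hU
  have hnorm : ∑ p, U j p * U j p = 1 := by
    have h1 : U * star U = 1 := (Matrix.mem_unitaryGroup_iff).mp hW.eigenvectorUnitary.2
    have := congrFun (congrFun h1 j) j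
    simpa [Matrix.mul_apply, Matrix.one_apply] using this
  have h1 : W j j = ∑ p, hW.eigenvalues p * (U j p * U j p) := by
    conv_lhs => rw [hW.spectral_theorem]
    simp [Matrix.mul_apply, Matrix.diagonal, Finset.mul_sum, ← hU]
    apply Finset.sum_congr rfl
    intro p _
    ring
  rw [h1]
  calc ∑ p, hW.eigenvalues p * (U j p * U j p)
      ≤ ∑ p, (⨆ i, hW.eigenvalues i) * (U j p * U j p) := by
        apply Finset.sum_le_sum
        intro p _
        exact mul_le_mul_of_nonneg_right
          (le_ciSup (Set.Finite.bddAbove (Set.finite_range _)) p) (mul_self_nonneg _)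
    _ = ⨆ i, hW.eigenvalues i := by rw [← Finset.mul_sum, hnorm, mul_one]

lemma trace_parallelogram (k N : ℕ) (X D : Matrix (Fin k) (Fin N) ℝ)
    (M : Matrix (Fin N) (Fin N) ℝ) :
    Matrix.trace ((X+D)*M*(X+D)ᵀ) + Matrix.trace ((X-D)*M*(X-D)ᵀ)
      = 2*Matrix.trace (X*M*Xᵀ) + 2*Matrix.trace (D*M*Dᵀ) := by
  have e1 : (X+D)*M*(X+D)ᵀ = X*M*Xᵀ + X*M*Dᵀ + D*M*Xᵀ + D*M*Dᵀ := by
    rw [transpose_add, Matrix.add_mul, Matrix.add_mul, Matrix.mul_add, Matrix.mul_add]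
    abel
  have e2 : (X-D)*M*(X-D)ᵀ = X*M*Xᵀ - X*M*Dᵀ - D*M*Xᵀ + D*M*Dᵀ := by
    rw [transpose_sub, Matrix.sub_mul, Matrix.sub_mul, Matrix.mul_sub, Matrix.mul_sub]
    abel
  rw [e1, e2]
  simp only [trace_add, trace_sub]
  ring

lemma trace_single_col (k N : ℕ) (M : Matrix (Fin N) (Fin N) ℝ) (j : Fin N) (d : Fin k → ℝ) :
    Matrix.trace ((Matrix.of fun i p => if p = j then d i else 0) * M *
      (Matrix.of fun i p => if p = j then d i else 0)ᵀ)
      = M j j * ∑ i, d i * d i := by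
  simp only [Matrix.trace, Matrix.diag, Matrix.mul_apply, Matrix.transpose_apply,
    Matrix.of_apply, ite_mul, mul_ite, zero_mul, mul_zero]
  simp [Finset.sum_ite_eq', Finset.mul_sum]
  exact Finset.sum_congr rfl fun i _ => by ring

/-- Let `W` be a symmetric real `N×N` matrix and `ρ > max(2 λ_max(W), 0)`. Set
`F(X;ρ) = Tr(X (W − (ρ/2)I) Xᵀ) + Nρ/2`. If `X* ∈ Δ_k^N` minimizes `F(·;ρ)` over
`Δ_k^N`, then every column of `X*` is a standard basis vector of `ℝ^k`. -/
theorem penalized_minimizer_columns_basis (k N : ℕ) (W : Matrix (Fin N) (Fin N) ℝ)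
    (hW : W.IsHermitian) (ρ : ℝ) (hρ : max (2 * ⨆ i, hW.eigenvalues i) 0 < ρ)
    (Xs : Matrix (Fin k) (Fin N) ℝ)
    (hXs : (∀ i j, 0 ≤ Xs i j) ∧ ∀ j, ∑ i, Xs i j = 1)
    (hmin : ∀ X : Matrix (Fin k) (Fin N) ℝ,
      (∀ i j, 0 ≤ X i j) → (∀ j, ∑ i, X i j = 1) →
        Matrix.trace (Xs * (W - (ρ / 2) • 1) * Xsᵀ) + N * ρ / 2 ≤
          Matrix.trace (X * (W - (ρ / 2) • 1) * Xᵀ) + N * ρ / 2) :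
    ∀ j, ∃ i, (fun a => Xs a j) = Pi.single i 1 := by
  obtain ⟨hpos, hsum⟩ := hXs
  intro j
  by_contra hcon
  push_neg at hcon
  set M : Matrix (Fin N) (Fin N) ℝ := W - (ρ / 2) • 1 with hM
  -- there is a positive entry in column j
  have h1 : ∑ i : Fin k, (0:ℝ) < ∑ i, Xs i j := by rw [hsum j]; simp
  obtain ⟨a, -, ha⟩ := Finset.exists_lt_of_sum_lt h1
  -- there is another positive entry
  obtain ⟨b, hba, hbpos⟩ : ∃ b, b ≠ a ∧ 0 < Xs b j := by
    by_contra h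
    push_neg at h
    apply hcon a
    funext i
    by_cases hi : i = a
    · subst hi
      have : ∑ i, Xs i j = Xs i j := by
        apply Finset.sum_eq_single_of_mem _ (Finset.mem_univ i)
        intro c _ hc
        exact le_antisymm (h c hc) (hpos c j)
      simp [← hsum j, this]
    · have : Xs i j = 0 := le_antisymm (h i hi) (hpos i j)
      simp [this, Pi.single, Function.update, hi]
  set ε : ℝ := min (Xs a j) (Xs b j) with hε
  have hεpos : 0 < ε := lt_min ha hbpos
  set d : Fin k → ℝ := fun i => if i = a then ε else if i = b then -ε else 0 with hd
  set D : Matrix (Fin k) (Fin N) ℝ := Matrix.of fun i p => if p = j then d i else 0 with hD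
  have hab : a ≠ b := fun h => hba h.symm
  -- column sums of D vanish
  have hd0 : ∑ i, d i = 0 := by
    have hsplit : ∀ i : Fin k, d i = (if i = a then ε else 0) + (if i = b then -ε else 0) := by
      intro i
      rcases eq_or_ne i a with hx | hx
      · subst hx; simp [hd, hab]
      · rcases eq_or_ne i b with hy | hy
        · subst hy; simp [hd, hx]
        · simp [hd, hx, hy]
    simp [hsplit, Finset.sum_add_distrib]
  have hDsum : ∀ p, ∑ i, D i p = 0 := by
    intro p
    by_cases hp : p = j <;> simp [hD, hp, hd0]
  -- feasibility of Xs + D and Xs - D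
  have hfeas : ∀ (s : ℝ), s = 1 ∨ s = -1 → (∀ i p, 0 ≤ (Xs + s • D) i p) ∧
      (∀ p, ∑ i, (Xs + s • D) i p = 1) := by
    intro s hs
    constructor
    · intro i p
      by_cases hp : p = j
      · rw [hp]
        have hval : (Xs + s • D) i j = Xs i j + s * d i := by
          simp [Matrix.add_apply, Matrix.smul_apply, hD, smul_eq_mul]
        rw [hval]
        rcases eq_or_ne i a with hia | hia
        · rw [hia]
          have hda : d a = ε := by simp [hd]
          rw [hda]
          have h1 : ε ≤ Xs a j := min_le_left _ _
          have h2 : (0:ℝ) ≤ Xs a j := hpos a j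
          rcases hs with h | h <;> rw [h] <;> linarith
        · rcases eq_or_ne i b with hib | hib
          · rw [hib]
            have hdb : d b = -ε := by simp [hd, hba]
            rw [hdb]
            have h1 : ε ≤ Xs b j := min_le_right _ _
            have h2 : (0:ℝ) ≤ Xs b j := hpos b j
            rcases hs with h | h <;> rw [h] <;> linarith
          · have hdi : d i = 0 := by simp [hd, hia, hib]
            rw [hdi]
            simpa using hpos i j
      · have hDip : D i p = 0 := by simp [hD, hp]
        simpa [Matrix.add_apply, hDip] using hpos i p
    · intro p
      have hz : ∑ x, s * D x p = 0 := by rw [← Finset.mul_sum, hDsum p, mul_zero]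
      simp [Finset.sum_add_distrib, hsum p, hz]
  obtain ⟨hf1a, hf1b⟩ := hfeas 1 (Or.inl rfl)
  obtain ⟨hf2a, hf2b⟩ := hfeas (-1) (Or.inr rfl)
  have hle1 := hmin (Xs + (1:ℝ) • D) hf1a hf1b
  have hle2 := hmin (Xs + (-1:ℝ) • D) hf2a hf2b
  rw [one_smul] at hle1
  have hsub : Xs + (-1:ℝ) • D = Xs - D := by rw [neg_one_smul]; abel
  rw [hsub] at hle2
  have key := trace_parallelogram k N Xs D M
  have htrD : Matrix.trace (D*M*Dᵀ) = M j j * (2 * ε^2) := by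
    rw [hD, trace_single_col]
    congr 1
    have hsq : ∀ i : Fin k, d i * d i =
        (if i = a then ε^2 else 0) + (if i = b then ε^2 else 0) := by
      intro i
      rcases eq_or_ne i a with hx | hx
      · subst hx; simp [hd, hab]; ring
      · rcases eq_or_ne i b with hy | hy
        · subst hy; simp [hd, hx]; ring
        · simp [hd, hx, hy]
    simp [hsq, Finset.sum_add_distrib]
    ring
  have hMjj : M j j < 0 := by
    have h2 : W j j ≤ ⨆ i, hW.eigenvalues i := diag_le_iSup_eigenvalues N W hW j
    have h3 : 2 * (⨆ i, hW.eigenvalues i) < ρ := lt_of_le_of_lt (le_max_left _ _) hρ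
    have : M j j = W j j - ρ / 2 := by
      simp [hM, Matrix.one_apply]
    rw [this]
    linarith
  have ht1 : Matrix.trace (Xs * M * Xsᵀ) ≤ Matrix.trace ((Xs + D) * M * (Xs + D)ᵀ) := by
    rw [hM] at *
    linarith
  have ht2 : Matrix.trace (Xs * M * Xsᵀ) ≤ Matrix.trace ((Xs - D) * M * (Xs - D)ᵀ) := by
    rw [hM] at *
    linarith
  nlinarith [sq_nonneg ε, mul_pos hεpos hεpos]
end

section
/- Let W be a symmetric real N×N matrix and let ρ > max(2λ_max(W), 0). Define F(X;ρ) = Tr(X (W − (ρ/2)I) Xᵀ) + Nρ/2. Then the minimum of F(·;ρ) over Δ_k^N equals the minimum of X ↦ Tr(X W Xᵀ) over the set of k×N matrices whose columns are standard basis vectors of ℝ^k. -/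
/-!
Put `A = W - (ρ/2) I`. Its diagonal entries are `W_jj - ρ/2 ≤ λ_max(W) - ρ/2 < 0`. As a
function of a single column `y` of `X`, `Tr(X A Xᵀ) = A_jj ‖y‖² + ⟨b, y⟩ + c`; on the simplex
`‖y‖² ≤ 1` and `⟨b, y⟩ ≥ min_i b_i`, so replacing `y` by the vertex `e_i` minimising `b_i` does
not increase the value. Rounding the columns one at a time moves any point of `Δ_k^N` to a matrix
with standard basis columns without increasing `F`, and on such matrices `Tr(X Xᵀ) = N`, so
`F(X; ρ) = Tr(X W Xᵀ)` there.
-/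

open Matrix

namespace Matrix

variable {m n : Type*}

theorem IsHermitian.diag_le_iSup_eigenvalues [Fintype n] [DecidableEq n] {W : Matrix n n ℝ}
    (hW : W.IsHermitian) (j : n) : W j j ≤ ⨆ i, hW.eigenvalues i := by
  set U : Matrix n n ℝ := (hW.eigenvectorUnitary : Matrix n n ℝ)
  have hU : ∑ t, U j t ^ 2 = 1 := by
    simpa [U, mul_apply, one_apply, sq] using
      congrFun₂ (mem_unitaryGroup_iff.mp hW.eigenvectorUnitary.2) j j
  have hWjj : W j j = ∑ t, hW.eigenvalues t * U j t ^ 2 := by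
    conv_lhs => rw [hW.spectral_theorem]
    simp only [U, Unitary.conjStarAlgAut_apply, mul_apply, diagonal_apply, sq,
      eigenvectorUnitary_apply, RCLike.ofReal_real_eq_id, Function.comp_apply, id_eq, mul_ite,
      mul_zero, Finset.sum_ite_eq', Finset.mem_univ, ↓reduceIte, star_apply, star_trivial]
    exact Finset.sum_congr rfl fun _ _ => by ring
  rw [hWjj]
  calc ∑ t, hW.eigenvalues t * U j t ^ 2 ≤ ∑ t, (⨆ i, hW.eigenvalues i) * U j t ^ 2 :=
        Finset.sum_le_sum fun t _ => mul_le_mul_of_nonneg_right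
          (le_ciSup (Set.finite_range _).bddAbove t) (sq_nonneg _)
    _ = ⨆ i, hW.eigenvalues i := by rw [← Finset.mul_sum, hU, mul_one]

theorem dotProduct_self_le_one_of_mem_stdSimplex [Fintype m] {y : m → ℝ}
    (hy : y ∈ stdSimplex ℝ m) : y ⬝ᵥ y ≤ 1 :=
  calc y ⬝ᵥ y ≤ ∑ i, y i := Finset.sum_le_sum fun i _ =>
        mul_le_of_le_one_right (hy.1 i) (mem_Icc_of_mem_stdSimplex hy i).2
    _ = 1 := hy.2

theorem exists_le_dotProduct_of_mem_stdSimplex [Fintype m] (b : m → ℝ) {y : m → ℝ}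
    (hy : y ∈ stdSimplex ℝ m) : ∃ i, b i ≤ b ⬝ᵥ y := by
  obtain ⟨i, -, hi⟩ := Finset.univ.exists_min_image b
    (Finset.nonempty_of_sum_ne_zero (hy.2 ▸ one_ne_zero))
  refine ⟨i, ?_⟩
  calc b i = ∑ a, b i * y a := by rw [← Finset.mul_sum, hy.2, mul_one]
    _ ≤ b ⬝ᵥ y := Finset.sum_le_sum fun a _ =>
        mul_le_mul_of_nonneg_right (hi a (Finset.mem_univ a)) (hy.1 a)

section updateCol

variable [DecidableEq n]

theorem col_updateCol_self (X : Matrix m n ℝ) (j : n) (y : m → ℝ) :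
    (X.updateCol j y).col j = y :=
  funext fun _ => updateCol_self

theorem col_updateCol_of_ne (X : Matrix m n ℝ) (y : m → ℝ) {j j' : n} (h : j' ≠ j) :
    (X.updateCol j y).col j' = X.col j' :=
  funext fun _ => updateCol_ne h

theorem updateCol_col_self (X : Matrix m n ℝ) (j : n) : X.updateCol j (X.col j) = X :=
  updateCol_eq_self X j

theorem updateCol_eq_updateCol_zero_add_vecMulVec (X : Matrix m n ℝ) (j : n) (y : m → ℝ) :
    X.updateCol j y = X.updateCol j 0 + vecMulVec y (Pi.single j 1) := by
  ext a b
  by_cases hb : b = j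
  · subst hb; simp [vecMulVec_apply]
  · simp [vecMulVec_apply, hb]

theorem trace_updateCol_mul_mul_transpose [Fintype m] [Fintype n] (X : Matrix m n ℝ)
    (A : Matrix n n ℝ) (j : n) (y : m → ℝ) :
    trace (X.updateCol j y * A * (X.updateCol j y)ᵀ) =
      trace (X.updateCol j 0 * A * (X.updateCol j 0)ᵀ)
        + (X.updateCol j 0 * (A + Aᵀ)).col j ⬝ᵥ y + A j j * (y ⬝ᵥ y) := by
  rw [updateCol_eq_updateCol_zero_add_vecMulVec X j y]
  set X₀ := X.updateCol j 0
  set Y := vecMulVec y (Pi.single j (1 : ℝ))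
  have hcross : trace (Y * A * X₀ᵀ) = trace (X₀ * Aᵀ * Yᵀ) := by
    rw [← trace_transpose]; simp [Matrix.mul_assoc]
  have hlin : ∀ B : Matrix n n ℝ, trace (X₀ * B * Yᵀ) = (X₀ * B).col j ⬝ᵥ y := fun B => by
    simp [Y, transpose_vecMulVec, mul_vecMulVec, trace_vecMulVec, dotProduct_comm]
  have hquad : trace (Y * A * Yᵀ) = A j j * (y ⬝ᵥ y) := by
    rw [vecMulVec_mul, transpose_vecMulVec, vecMulVec_mul_vecMulVec, trace_vecMulVec]
    simp [dotProduct_smul]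
  simp only [transpose_add, Matrix.add_mul, Matrix.mul_add, trace_add, hcross, hlin, hquad]
  rw [show (X₀ * A + X₀ * Aᵀ).col j = (X₀ * A).col j + (X₀ * Aᵀ).col j from rfl,
    add_dotProduct]
  ring

theorem exists_trace_updateCol_single_le [Fintype m] [DecidableEq m] [Fintype n]
    {A : Matrix n n ℝ} {j : n} (hA : A j j ≤ 0) (X : Matrix m n ℝ) {y : m → ℝ}
    (hy : y ∈ stdSimplex ℝ m) :
    ∃ i, trace (X.updateCol j (Pi.single i 1) * A * (X.updateCol j (Pi.single i 1))ᵀ)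
      ≤ trace (X.updateCol j y * A * (X.updateCol j y)ᵀ) := by
  obtain ⟨i, hi⟩ :=
    exists_le_dotProduct_of_mem_stdSimplex ((X.updateCol j 0 * (A + Aᵀ)).col j) hy
  refine ⟨i, ?_⟩
  rw [trace_updateCol_mul_mul_transpose X A j y,
    trace_updateCol_mul_mul_transpose X A j (Pi.single i 1)]
  simp only [dotProduct_single_one, Pi.single_eq_same, mul_one]
  nlinarith [mul_le_mul_of_nonpos_left (dotProduct_self_le_one_of_mem_stdSimplex hy) hA]

end updateCol

variable (m n) in
def columnSimplex [Fintype m] : Set (Matrix m n ℝ) := {X | ∀ j, X.col j ∈ stdSimplex ℝ m}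

variable (m n) in
def columnVertices [DecidableEq m] : Set (Matrix m n ℝ) := {X | ∀ j, ∃ i, X.col j = Pi.single i 1}

theorem columnSimplex_eq [Fintype m] :
    columnSimplex m n = {X | (∀ i j, 0 ≤ X i j) ∧ ∀ j, ∑ i, X i j = 1} := by
  ext X
  exact ⟨fun h => ⟨fun i j => (h j).1 i, fun j => (h j).2⟩, fun h j => ⟨fun i => h.1 i j, h.2 j⟩⟩

theorem columnVertices_subset_columnSimplex [Fintype m] [DecidableEq m] :
    columnVertices m n ⊆ columnSimplex m n := by
  intro X hX j
  obtain ⟨i, hi⟩ := hX j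
  exact hi ▸ single_mem_stdSimplex ℝ i

theorem finite_columnVertices [Finite m] [DecidableEq m] [Fintype n] [DecidableEq n] :
    (columnVertices m n).Finite := by
  refine (Set.finite_range fun σ : n → m =>
    (of fun j => Pi.single (σ j) 1 : Matrix n m ℝ)ᵀ).subset ?_
  intro X hX
  choose σ hσ using hX
  exact ⟨σ, by ext a b; exact (congrFun (hσ b) a).symm⟩

theorem updateCol_mem_columnSimplex [Fintype m] [DecidableEq n] {X : Matrix m n ℝ}
    (hX : X ∈ columnSimplex m n) (j : n) {y : m → ℝ} (hy : y ∈ stdSimplex ℝ m) :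
    X.updateCol j y ∈ columnSimplex m n := by
  intro j'
  by_cases h : j' = j
  · subst h; rw [col_updateCol_self]; exact hy
  · rw [col_updateCol_of_ne X y h]; exact hX j'

theorem exists_mem_columnVertices_trace_le [Fintype m] [DecidableEq m] [Fintype n]
    [DecidableEq n] {A : Matrix n n ℝ} (hA : ∀ j, A j j ≤ 0) {X : Matrix m n ℝ}
    (hX : X ∈ columnSimplex m n) :
    ∃ V ∈ columnVertices m n, trace (V * A * Vᵀ) ≤ trace (X * A * Xᵀ) := by
  suffices key : ∀ S : Finset n, ∀ X ∈ columnSimplex m n,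
      (∀ j ∉ S, ∃ i, X.col j = Pi.single i 1) →
        ∃ V ∈ columnVertices m n, trace (V * A * Vᵀ) ≤ trace (X * A * Xᵀ) from
    key Finset.univ X hX fun j hj => absurd (Finset.mem_univ j) hj
  intro S
  induction S using Finset.induction_on with
  | empty => exact fun X _ hX => ⟨X, fun j => hX j (Finset.notMem_empty j), le_rfl⟩
  | insert j S _ ih =>
    intro X hX hvert
    obtain ⟨i, hi⟩ := exists_trace_updateCol_single_le (hA j) X (hX j)
    rw [updateCol_col_self] at hi
    obtain ⟨V, hV, hle⟩ := ih _ (updateCol_mem_columnSimplex hX j (single_mem_stdSimplex ℝ i))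
      fun j' hj' => by
        by_cases h : j' = j
        · exact ⟨i, h ▸ col_updateCol_self X j _⟩
        · exact col_updateCol_of_ne X _ h ▸ hvert j' (by simp [h, hj'])
    exact ⟨V, hV, hle.trans hi⟩

theorem trace_mul_transpose_of_mem_columnVertices [Fintype m] [DecidableEq m] [Fintype n]
    {V : Matrix m n ℝ} (hV : V ∈ columnVertices m n) : trace (V * Vᵀ) = Fintype.card n := by
  rw [trace_mul_comm]
  change ∑ j, V.col j ⬝ᵥ V.col j = _
  calc ∑ j, V.col j ⬝ᵥ V.col j = ∑ _ : n, (1 : ℝ) :=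
        Finset.sum_congr rfl fun j _ => by obtain ⟨i, hi⟩ := hV j; simp [hi]
    _ = Fintype.card n := by simp

theorem trace_mul_sub_smul_one_mul_transpose_of_mem_columnVertices [Fintype m] [DecidableEq m]
    [Fintype n] [DecidableEq n] (W : Matrix n n ℝ) (c : ℝ) {V : Matrix m n ℝ}
    (hV : V ∈ columnVertices m n) :
    trace (V * (W - c • 1) * Vᵀ) = trace (V * W * Vᵀ) - c * Fintype.card n := by
  rw [Matrix.mul_sub, Matrix.sub_mul, trace_sub, Matrix.mul_smul, Matrix.smul_mul, trace_smul,
    Matrix.mul_one, trace_mul_transpose_of_mem_columnVertices hV, smul_eq_mul]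

theorem sInf_image_columnSimplex_eq [Fintype m] [DecidableEq m] [Fintype n] [DecidableEq n]
    {F f : Matrix m n ℝ → ℝ} (hFf : ∀ V ∈ columnVertices m n, F V = f V)
    (hround : ∀ X ∈ columnSimplex m n, ∃ V ∈ columnVertices m n, F V ≤ F X) :
    sInf (F '' columnSimplex m n) = sInf (f '' columnVertices m n) := by
  rcases (columnVertices m n).eq_empty_or_nonempty with hempty | hne
  · have : columnSimplex m n = ∅ := Set.eq_empty_of_forall_notMem fun X hX => by
      obtain ⟨V, hV, -⟩ := hround X hX
      exact hempty.subset hV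
    rw [this, hempty, Set.image_empty, Set.image_empty]
  obtain ⟨V₀, hV₀, hmin⟩ := Set.exists_min_image _ f finite_columnVertices hne
  have hleast : IsLeast (F '' columnSimplex m n) (f V₀) := by
    refine ⟨⟨V₀, columnVertices_subset_columnSimplex hV₀, hFf V₀ hV₀⟩, ?_⟩
    rintro _ ⟨X, hX, rfl⟩
    obtain ⟨V, hV, hle⟩ := hround X hX
    calc f V₀ ≤ f V := hmin V hV
      _ = F V := (hFf V hV).symm
      _ ≤ F X := hle
  rw [hleast.csInf_eq, IsLeast.csInf_eq ⟨Set.mem_image_of_mem f hV₀, Set.forall_mem_image.2 hmin⟩]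

end Matrix

/-- Let `W` be a symmetric real `N×N` matrix and `ρ > max(2 λ_max(W), 0)`. Set
`F(X;ρ) = Tr(X (W − (ρ/2)I) Xᵀ) + Nρ/2`. Then the minimum of `F(·;ρ)` over `Δ_k^N`
equals the minimum of `X ↦ Tr(X W Xᵀ)` over the set of `k×N` matrices whose columns
are standard basis vectors of `ℝ^k`. -/
theorem penalized_min_value_eq (k N : ℕ) (W : Matrix (Fin N) (Fin N) ℝ)
    (hW : W.IsHermitian) (ρ : ℝ) (hρ : max (2 * ⨆ i, hW.eigenvalues i) 0 < ρ) :
    sInf ((fun X : Matrix (Fin k) (Fin N) ℝ =>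
          Matrix.trace (X * (W - (ρ / 2) • 1) * Xᵀ) + N * ρ / 2) ''
        {X | (∀ i j, 0 ≤ X i j) ∧ ∀ j, ∑ i, X i j = 1})
      = sInf ((fun X : Matrix (Fin k) (Fin N) ℝ => Matrix.trace (X * W * Xᵀ)) ''
        {X | ∀ j, ∃ i, (fun a => X a j) = Pi.single i 1}) := by
  have hA : ∀ j, (W - (ρ / 2) • 1) j j ≤ 0 := fun j => by
    have := hW.diag_le_iSup_eigenvalues j
    have := (le_max_left _ _).trans_lt hρ
    simp only [Matrix.sub_apply, Matrix.smul_apply, one_apply_eq, smul_eq_mul]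
    linarith
  rw [← columnSimplex_eq]
  refine sInf_image_columnSimplex_eq (fun V hV => ?_) fun X hX => ?_
  · rw [trace_mul_sub_smul_one_mul_transpose_of_mem_columnVertices W _ hV, Fintype.card_fin]
    ring
  · obtain ⟨V, hV, hle⟩ := exists_mem_columnVertices_trace_le hA hX
    exact ⟨V, hV, by linarith⟩
end

section
/- (L-smoothness of the penalized objective relative to KL.) Let W be a symmetric real N×N matrix, ρ ∈ ℝ, and define F(X;ρ) = Tr(X (W − (ρ/2)I) Xᵀ) + Nρ/2 and L = ‖2W − ρI‖_F. Then for all X, Y ∈ Δ_k^N with X having all entries strictly positive, F(Y;ρ) ≤ F(X;ρ) + ⟨X(2W − ρI), Y − X⟩ + L · KL(Y, X), where ⟨A, B⟩ = Tr(AᵀB) is the Frobenius inner product. -/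
/-!
With `M = 2W − ρI` the objective is `F(Z) = Tr(Z M Zᵀ)/2 + Nρ/2`, and since `M` is symmetric,
`F(Y) − F(X) − ⟨XM, D⟩ = Tr(D M Dᵀ)/2` for `D = Y − X`. Cauchy–Schwarz, row by row, bounds
`Tr(D M Dᵀ)` by `‖M‖_F ‖D‖_F²`. Finally `t ↦ t log t` is `1`-strongly convex on `[0, 1]`, so
`y log (y/x) ≥ (y − x) + (y − x)²/2` entrywise; summed over a column of two stochastic matrices the
linear terms cancel, whence `‖D‖_F² ≤ 2 KL(Y, X)`.
-/

open Matrix Real Set Finset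

lemma monotoneOn_log_sub_self : MonotoneOn (fun t => log t - t) (Ioc 0 1) := by
  intro s ⟨hs, _⟩ t ⟨ht, ht1⟩ hst
  -- `log (t / s) ≥ 1 - s / t = (t - s) / t ≥ t - s`
  have hlog : 1 - (t / s)⁻¹ ≤ log (t / s) := one_sub_inv_le_log_of_pos (by positivity)
  rw [log_div ht.ne' hs.ne', inv_div, one_sub_div ht.ne'] at hlog
  have : t - s ≤ (t - s) / t := le_div_self (by linarith) ht ht1
  dsimp only
  linarith

lemma convexOn_mul_log_sub_sq_div_two :
    ConvexOn ℝ (Icc 0 1) (fun t => t * log t - t ^ 2 / 2) := by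
  have hderiv : ∀ t, 0 < t → HasDerivAt (fun t => t * log t - t ^ 2 / 2) (log t + 1 - t) t :=
    fun t ht => by
      simpa using (hasDerivAt_mul_log ht.ne').fun_sub ((hasDerivAt_pow 2 t).div_const 2)
  refine MonotoneOn.convexOn_of_deriv (convex_Icc 0 1) (by fun_prop) ?_ ?_
  · rw [interior_Icc]
    exact fun t ht => (hderiv t ht.1).differentiableAt.differentiableWithinAt
  · rw [interior_Icc]
    intro s hs t ht hst
    rw [(hderiv s hs.1).deriv, (hderiv t ht.1).deriv]
    have := monotoneOn_log_sub_self ⟨hs.1, hs.2.le⟩ ⟨ht.1, ht.2.le⟩ hst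
    dsimp only at this
    linarith

lemma sub_add_sq_div_two_le_mul_log_div {x y : ℝ} (hx : 0 < x) (hx1 : x ≤ 1) (hy : 0 ≤ y)
    (hy1 : y ≤ 1) : (y - x) + (y - x) ^ 2 / 2 ≤ y * log (y / x) := by
  have hg : HasDerivAt (fun t => t * log t - t ^ 2 / 2) (log x + 1 - x) x := by
    simpa using (hasDerivAt_mul_log hx.ne').fun_sub ((hasDerivAt_pow 2 x).div_const 2)
  have htangent :
      x * log x - x ^ 2 / 2 + (log x + 1 - x) * (y - x) ≤ y * log y - y ^ 2 / 2 := by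
    have hconv := convexOn_mul_log_sub_sq_div_two
    have hxI : x ∈ Icc (0 : ℝ) 1 := ⟨hx.le, hx1⟩
    have hyI : y ∈ Icc (0 : ℝ) 1 := ⟨hy, hy1⟩
    rcases lt_trichotomy x y with hxy | rfl | hxy
    · have := hconv.le_slope_of_hasDerivAt hxI hyI hxy hg
      rw [slope_def_field, le_div_iff₀ (by linarith)] at this
      linarith
    · simp
    · have := hconv.slope_le_of_hasDerivAt hyI hxI hxy hg
      rw [slope_def_field, div_le_iff₀ (by linarith)] at this
      linarith
  have hmul_log : y * log (y / x) = y * log y - y * log x := by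
    rcases hy.eq_or_lt with rfl | hy0
    · simp
    · rw [log_div hy0.ne' hx.ne']; ring
  rw [hmul_log]
  linarith

lemma sum_sq_sub_le_two_mul_sum_mul_log_div {ι : Type*} [Fintype ι] {x y : ι → ℝ}
    (hx : ∀ i, 0 < x i) (hx1 : ∑ i, x i = 1) (hy : ∀ i, 0 ≤ y i) (hy1 : ∑ i, y i = 1) :
    ∑ i, (y i - x i) ^ 2 ≤ 2 * ∑ i, y i * log (y i / x i) := by
  have hle : ∀ (z : ι → ℝ), (∀ i, 0 ≤ z i) → ∑ i, z i = 1 → ∀ i, z i ≤ 1 := fun z hz hz1 i =>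
    hz1 ▸ single_le_sum (fun j _ => hz j) (mem_univ i)
  have hpoint : ∑ i, ((y i - x i) + (y i - x i) ^ 2 / 2) ≤ ∑ i, y i * log (y i / x i) :=
    sum_le_sum fun i _ => sub_add_sq_div_two_le_mul_log_div (hx i)
      (hle x (fun j => (hx j).le) hx1 i) (hy i) (hle y hy hy1 i)
  rw [sum_add_distrib, sum_sub_distrib, hx1, hy1, ← sum_div] at hpoint
  linarith

lemma dotProduct_mulVec_le_sqrt_mul {n : Type*} [Fintype n] (M : Matrix n n ℝ) (v : n → ℝ) :
    v ⬝ᵥ (M *ᵥ v) ≤ √(∑ j, ∑ l, M j l ^ 2) * (v ⬝ᵥ v) := by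
  have hpairs : v ⬝ᵥ (M *ᵥ v) = ∑ p : n × n, M p.1 p.2 * (v p.1 * v p.2) := by
    rw [Fintype.sum_prod_type]
    simp only [dotProduct, mulVec, mul_sum]
    exact sum_congr rfl fun j _ => sum_congr rfl fun l _ => by ring
  have hsq : ∑ p : n × n, (v p.1 * v p.2) ^ 2 = (v ⬝ᵥ v) ^ 2 := by
    simp only [Fintype.sum_prod_type, mul_pow, ← mul_sum, ← sum_mul, dotProduct, ← sq]
  rw [hpairs]
  calc ∑ p : n × n, M p.1 p.2 * (v p.1 * v p.2)
      ≤ √(∑ p : n × n, M p.1 p.2 ^ 2) * √(∑ p : n × n, (v p.1 * v p.2) ^ 2) :=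
        sum_mul_le_sqrt_mul_sqrt _ _ _
    _ = √(∑ j, ∑ l, M j l ^ 2) * (v ⬝ᵥ v) := by
        rw [hsq, sqrt_sq (by simpa using dotProduct_self_star_nonneg v), Fintype.sum_prod_type]

lemma trace_mul_mul_transpose_le {m n : Type*} [Fintype m] [Fintype n] (D : Matrix m n ℝ)
    (M : Matrix n n ℝ) :
    trace (D * M * Dᵀ) ≤ √(∑ j, ∑ l, M j l ^ 2) * ∑ i, ∑ j, D i j ^ 2 := by
  have hrows : trace (D * M * Dᵀ) = ∑ i, D i ⬝ᵥ (M *ᵥ D i) := by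
    simp only [trace, Matrix.diag, mul_apply, transpose_apply, dotProduct, mulVec, sum_mul,
      mul_sum]
    exact sum_congr rfl fun i _ => by rw [sum_comm]; simp only [mul_assoc]
  rw [hrows, mul_sum]
  refine sum_le_sum fun i _ => ?_
  simpa only [dotProduct, ← sq] using dotProduct_mulVec_le_sqrt_mul M (D i)

lemma trace_add_mul_mul_transpose_add {R m n : Type*} [CommSemiring R] [Fintype m] [Fintype n]
    {M : Matrix n n R} (hM : M.IsSymm) (X D : Matrix m n R) :
    trace ((X + D) * M * (X + D)ᵀ)
      = trace (X * M * Xᵀ) + 2 * trace (X * M * Dᵀ) + trace (D * M * Dᵀ) := by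
  have hcross : trace (D * M * Xᵀ) = trace (X * M * Dᵀ) := by
    rw [← trace_transpose, transpose_mul, transpose_mul, transpose_transpose, hM.eq,
      ← Matrix.mul_assoc]
  simp only [Matrix.add_mul, Matrix.mul_add, transpose_add, trace_add, hcross]
  ring

/-- **L-smoothness of the penalized objective relative to KL.** Let `W` be a symmetric
real `N×N` matrix, `ρ ∈ ℝ`, define `F(X;ρ) = Tr(X (W − (ρ/2)I) Xᵀ) + Nρ/2` and
`L = ‖2W − ρI‖_F`. Then for all `X, Y ∈ Δ_k^N` with `X` entrywise strictly positive,
`F(Y;ρ) ≤ F(X;ρ) + ⟨X(2W − ρI), Y − X⟩ + L · KL(Y, X)`. -/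
theorem penalized_L_smooth_KL (k N : ℕ) (W : Matrix (Fin N) (Fin N) ℝ)
    (hW : W.IsSymm) (ρ : ℝ)
    (X Y : Matrix (Fin k) (Fin N) ℝ)
    (hXpos : ∀ i j, 0 < X i j) (hXcol : ∀ j, ∑ i, X i j = 1)
    (hYnn : ∀ i j, 0 ≤ Y i j) (hYcol : ∀ j, ∑ i, Y i j = 1) :
    Matrix.trace (Y * (W - (ρ / 2) • 1) * Yᵀ) + N * ρ / 2
      ≤ Matrix.trace (X * (W - (ρ / 2) • 1) * Xᵀ) + N * ρ / 2
        + (∑ i, ∑ j, (X * ((2 : ℝ) • W - ρ • (1 : Matrix (Fin N) (Fin N) ℝ))) i j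
            * (Y i j - X i j))
        + Real.sqrt (∑ i, ∑ j,
            (((2 : ℝ) • W - ρ • (1 : Matrix (Fin N) (Fin N) ℝ)) i j) ^ 2)
          * ∑ i, ∑ j, Y i j * Real.log (Y i j / X i j) := by
  set M : Matrix (Fin N) (Fin N) ℝ := (2 : ℝ) • W - ρ • 1
  have hM : M.IsSymm := (hW.smul 2).sub (isSymm_one.smul ρ)
  have hF : ∀ Z : Matrix (Fin k) (Fin N) ℝ,
      trace (Z * (W - (ρ / 2) • 1) * Zᵀ) = trace (Z * M * Zᵀ) / 2 := fun Z => by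
    rw [show W - (ρ / 2) • 1 = (1 / 2 : ℝ) • M by module, Matrix.mul_smul, Matrix.smul_mul,
      trace_smul, smul_eq_mul]
    ring
  have hlin : ∑ i, ∑ j, (X * M) i j * (Y i j - X i j) = trace (X * M * (Y - X)ᵀ) := by
    simp [trace, mul_apply]
  have hexpand := trace_add_mul_mul_transpose_add hM X (Y - X)
  rw [add_sub_cancel] at hexpand
  have hKL : ∑ i, ∑ j, (Y - X) i j ^ 2 ≤ 2 * ∑ i, ∑ j, Y i j * log (Y i j / X i j) :=
    calc ∑ i, ∑ j, (Y - X) i j ^ 2 = ∑ j, ∑ i, (Y i j - X i j) ^ 2 := by rw [sum_comm]; rfl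
      _ ≤ ∑ j, 2 * ∑ i, Y i j * log (Y i j / X i j) := sum_le_sum fun j _ =>
          sum_sq_sub_le_two_mul_sum_mul_log_div (fun i => hXpos i j) (hXcol j)
            (fun i => hYnn i j) (hYcol j)
      _ = 2 * ∑ i, ∑ j, Y i j * log (Y i j / X i j) := by rw [← mul_sum, sum_comm]
  rw [hF, hF, hlin]
  linarith [trace_mul_mul_transpose_le (Y - X) M,
    mul_le_mul_of_nonneg_left hKL (sqrt_nonneg (∑ i, ∑ j, M i j ^ 2))]
end

section
/- (Proximal fixed points are stationary points.) Let W be a symmetric real N×N matrix, ρ ∈ ℝ, and t > 0. Suppose X* ∈ Δ_k^N has all entries strictly positive and X* minimizes the function Y ↦ ⟨t X*(2W − ρI), Y⟩ + KL(Y, X*) over Δ_k^N, where ⟨A, B⟩ = Tr(AᵀB). Then X* is a stationary point of the problem of minimizing Tr(X(W − (ρ/2)I)Xᵀ) over Δ_k^N, i.e., ⟨X*(2W − ρI), X − X*⟩ ≥ 0 for all X ∈ Δ_k^N. -/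
open Matrix

/-- **Proximal fixed points are stationary points.** Let `W` be a symmetric real
`N×N` matrix, `ρ ∈ ℝ`, `t > 0`. Suppose `X* ∈ Δ_k^N` has all entries strictly
positive and minimizes `Y ↦ ⟨t X*(2W − ρI), Y⟩ + KL(Y, X*)` over `Δ_k^N`. Then `X*`
is a stationary point of minimizing `Tr(X(W − (ρ/2)I)Xᵀ)` over `Δ_k^N`, i.e.
`⟨X*(2W − ρI), X − X*⟩ ≥ 0` for all `X ∈ Δ_k^N`. -/
theorem proximal_fixed_point_stationary (k N : ℕ) (W : Matrix (Fin N) (Fin N) ℝ)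
    (hW : W.IsSymm) (ρ t : ℝ) (ht : 0 < t)
    (Xs : Matrix (Fin k) (Fin N) ℝ)
    (hpos : ∀ i j, 0 < Xs i j) (hcol : ∀ j, ∑ i, Xs i j = 1)
    (hmin : ∀ Y : Matrix (Fin k) (Fin N) ℝ,
      (∀ i j, 0 ≤ Y i j) → (∀ j, ∑ i, Y i j = 1) →
        (∑ i, ∑ j, t * (Xs * ((2 : ℝ) • W - ρ • (1 : Matrix (Fin N) (Fin N) ℝ))) i j
              * Xs i j)
            + (∑ i, ∑ j, Xs i j * Real.log (Xs i j / Xs i j))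
          ≤ (∑ i, ∑ j, t * (Xs * ((2 : ℝ) • W - ρ • (1 : Matrix (Fin N) (Fin N) ℝ))) i j
              * Y i j)
            + ∑ i, ∑ j, Y i j * Real.log (Y i j / Xs i j)) :
    ∀ X : Matrix (Fin k) (Fin N) ℝ,
      (∀ i j, 0 ≤ X i j) → (∀ j, ∑ i, X i j = 1) →
        0 ≤ ∑ i, ∑ j, (Xs * ((2 : ℝ) • W - ρ • (1 : Matrix (Fin N) (Fin N) ℝ))) i j
              * (X i j - Xs i j) := by
  intro X hXnn hXcol
  set G : Matrix (Fin k) (Fin N) ℝ :=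
    Xs * ((2 : ℝ) • W - ρ • (1 : Matrix (Fin N) (Fin N) ℝ)) with hG
  set A : ℝ := ∑ i, ∑ j, G i j * (X i j - Xs i j) with hA
  by_contra hcon
  push_neg at hcon
  set C : ℝ := ∑ i, ∑ j, (X i j - Xs i j) ^ 2 / Xs i j with hCdef
  have hC : 0 ≤ C :=
    Finset.sum_nonneg fun i _ => Finset.sum_nonneg fun j _ =>
      div_nonneg (sq_nonneg _) (hpos i j).le
  set s : ℝ := min 1 (t * (-A) / (2 * (C + 1))) with hsdef
  have hs0 : 0 < s :=
    lt_min one_pos (div_pos (mul_pos ht (neg_pos.2 hcon)) (by linarith))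
  have hs1 : s ≤ 1 := min_le_left _ _
  have hsC : s * (C + 1) ≤ t * (-A) / 2 := by
    have h := min_le_right 1 (t * (-A) / (2 * (C + 1)))
    have hC1 : (0:ℝ) < C + 1 := by linarith
    calc s * (C + 1) ≤ (t * (-A) / (2 * (C + 1))) * (C + 1) :=
          mul_le_mul_of_nonneg_right h hC1.le
      _ = t * (-A) / 2 := by field_simp
  set Y : Matrix (Fin k) (Fin N) ℝ :=
    Matrix.of (fun i j => Xs i j + s * (X i j - Xs i j)) with hY
  have hYval : ∀ i j, Y i j = Xs i j + s * (X i j - Xs i j) := fun i j => rfl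
  have hYnn : ∀ i j, 0 ≤ Y i j := by
    intro i j
    rw [hYval]
    nlinarith [mul_nonneg (sub_nonneg.2 hs1) (hpos i j).le,
      mul_nonneg hs0.le (hXnn i j)]
  have hYcol : ∀ j, ∑ i, Y i j = 1 := by
    intro j
    simp only [hYval]
    rw [Finset.sum_add_distrib, ← Finset.mul_sum, Finset.sum_sub_distrib,
      hcol, hXcol]
    ring
  have hle := hmin Y hYnn hYcol
  have hzero : ∑ i, ∑ j, Xs i j * Real.log (Xs i j / Xs i j) = 0 := by
    refine Finset.sum_eq_zero fun i _ => Finset.sum_eq_zero fun j _ => ?_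
    rw [div_self (hpos i j).ne', Real.log_one, mul_zero]
  have h1 : ∑ i, ∑ j, t * G i j * Y i j
      = (∑ i, ∑ j, t * G i j * Xs i j) + t * s * A := by
    rw [hA, Finset.mul_sum, ← Finset.sum_add_distrib]
    refine Finset.sum_congr rfl fun i _ => ?_
    rw [Finset.mul_sum, ← Finset.sum_add_distrib]
    refine Finset.sum_congr rfl fun j _ => ?_
    rw [hYval]
    ring
  have hD : ∑ i, ∑ j, (X i j - Xs i j) = 0 := by
    rw [Finset.sum_comm]
    refine Finset.sum_eq_zero fun j _ => ?_
    rw [Finset.sum_sub_distrib, hXcol j, hcol j, sub_self]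
  have hpt : ∀ i j, Y i j * Real.log (Y i j / Xs i j)
      ≤ s * (X i j - Xs i j) + s ^ 2 * ((X i j - Xs i j) ^ 2 / Xs i j) := by
    intro i j
    have hx : 0 < Xs i j := hpos i j
    rcases (hYnn i j).eq_or_lt with h0 | h0
    · have h0' : Xs i j + s * (X i j - Xs i j) = 0 := by rw [← hYval]; exact h0.symm
      rw [← h0, zero_mul]
      have hsd : s * (X i j - Xs i j) = -Xs i j := by linarith
      have hsq : s ^ 2 * ((X i j - Xs i j) ^ 2 / Xs i j)
          = (s * (X i j - Xs i j)) ^ 2 / Xs i j := by ring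
      rw [hsq, hsd, neg_sq, sq, mul_div_assoc, div_self hx.ne', mul_one]
      linarith
    · have hlog : Real.log (Y i j / Xs i j) ≤ Y i j / Xs i j - 1 :=
        Real.log_le_sub_one_of_pos (div_pos h0 hx)
      calc Y i j * Real.log (Y i j / Xs i j)
          ≤ Y i j * (Y i j / Xs i j - 1) :=
            mul_le_mul_of_nonneg_left hlog h0.le
        _ = s * (X i j - Xs i j) + s ^ 2 * ((X i j - Xs i j) ^ 2 / Xs i j) := by
            rw [hYval]; field_simp; ring
  have h2 : ∑ i, ∑ j, Y i j * Real.log (Y i j / Xs i j) ≤ s ^ 2 * C := by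
    calc ∑ i, ∑ j, Y i j * Real.log (Y i j / Xs i j)
        ≤ ∑ i, ∑ j, (s * (X i j - Xs i j)
            + s ^ 2 * ((X i j - Xs i j) ^ 2 / Xs i j)) :=
          Finset.sum_le_sum fun i _ => Finset.sum_le_sum fun j _ => hpt i j
      _ = s * (∑ i, ∑ j, (X i j - Xs i j)) + s ^ 2 * C := by
          rw [hCdef, Finset.mul_sum, Finset.mul_sum, ← Finset.sum_add_distrib]
          refine Finset.sum_congr rfl fun i _ => ?_
          rw [Finset.mul_sum, Finset.mul_sum, ← Finset.sum_add_distrib]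
      _ = s ^ 2 * C := by rw [hD]; ring
  rw [hzero, add_zero, h1] at hle
  have key : 0 ≤ t * s * A + s ^ 2 * C := by linarith
  nlinarith [mul_le_mul_of_nonneg_left hsC hs0.le, sq_nonneg s,
    mul_neg_of_pos_of_neg (mul_pos ht hs0) hcon]
end

section
/- (Convergence rate of mirror descent for the penalized Min-k-Partition problem.) Let W be a symmetric real N×N matrix with nonnegative entries, let ρ > 0, set L = ‖2W − ρI‖_F and step sizes t_m = 1/(L + m + 1) for m ≥ 0. Let X⁰ ∈ Δ_k^N have all entries strictly positive, and define the sequence (X^m)_{m≥0} by the entrywise update X^{m+1}_{ij} = X^m_{ij} exp(−t_m [X^m(2W − ρI)]_{ij}) / Σ_{p=1}^k X^m_{pj} exp(−t_m [X^m(2W − ρI)]_{pj}). Then every X^m lies in Δ_k^N with all entries strictly positive, and for every integer T ≥ 1, min_{0 ≤ m ≤ T−1} KL(X^{m+1}, X^m) ≤ (2‖W‖_{1,1} + ρN) / (T(T+1)). -/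
open Matrix

lemma md_sq_le_aux {a b : ℝ} (hb : 0 < b) (ha1 : a ≤ 1) (hba : b ≤ a) :
    (a - b) ^ 2 ≤ (a - b) * (Real.log a - Real.log b) := by
  have ha : 0 < a := lt_of_lt_of_le hb hba
  have h1 : Real.log (b / a) ≤ b / a - 1 := Real.log_le_sub_one_of_pos (div_pos hb ha)
  have h2 : Real.log (b / a) = Real.log b - Real.log a := Real.log_div (ne_of_gt hb) (ne_of_gt ha)
  have he : (a - b) / a = 1 - b / a := by field_simp
  have h3 : (a - b) / a ≤ Real.log a - Real.log b := by rw [he]; linarith [h2 ▸ h1]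
  have h4 : a - b ≤ (a - b) / a := by
    rw [le_div_iff₀ ha]; nlinarith
  have h5 : a - b ≤ Real.log a - Real.log b := le_trans h4 h3
  have h6 : 0 ≤ a - b := by linarith
  have : (a - b) ^ 2 = (a - b) * (a - b) := by ring
  rw [this]
  exact mul_le_mul_of_nonneg_left h5 h6

lemma md_sq_le {a b : ℝ} (ha : 0 < a) (ha1 : a ≤ 1) (hb : 0 < b) (hb1 : b ≤ 1) :
    (a - b) ^ 2 ≤ (a - b) * (Real.log a - Real.log b) := by
  rcases le_total b a with h | h
  · exact md_sq_le_aux hb ha1 h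
  · have := md_sq_le_aux ha hb1 h
    calc (a - b) ^ 2 = (b - a) ^ 2 := by ring
      _ ≤ (b - a) * (Real.log b - Real.log a) := this
      _ = (a - b) * (Real.log a - Real.log b) := by ring

lemma md_gibbs {k : ℕ} (p q : Fin k → ℝ) (hp : ∀ i, 0 < p i) (hq : ∀ i, 0 < q i)
    (hps : ∑ i, p i = 1) (hqs : ∑ i, q i = 1) :
    0 ≤ ∑ i, p i * (Real.log (p i) - Real.log (q i)) := by
  have key : ∀ i, p i - q i ≤ p i * (Real.log (p i) - Real.log (q i)) := by
    intro i
    have h1 : Real.log (q i / p i) ≤ q i / p i - 1 :=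
      Real.log_le_sub_one_of_pos (div_pos (hq i) (hp i))
    rw [Real.log_div (ne_of_gt (hq i)) (ne_of_gt (hp i))] at h1
    have hpi := hp i
    have h2 : 1 - q i / p i ≤ Real.log (p i) - Real.log (q i) := by linarith
    have h3 : p i * (1 - q i / p i) = p i - q i := by field_simp
    nlinarith [mul_le_mul_of_nonneg_left h2 (le_of_lt hpi)]
  calc (0:ℝ) = ∑ i, (p i - q i) := by rw [Finset.sum_sub_distrib, hps, hqs]; ring
    _ ≤ _ := Finset.sum_le_sum fun i _ => key i

lemma md_update {k : ℕ} (p g q : Fin k → ℝ) (hp : ∀ i, 0 < p i) (hps : ∑ i, p i = 1)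
    (hq : ∀ i, q i = p i * Real.exp (-(g i)) / ∑ l, p l * Real.exp (-(g l))) :
    (∀ i, 0 < q i) ∧ (∑ i, q i = 1) ∧
      ∑ i, (q i - p i) * (Real.log (q i) - Real.log (p i)) = ∑ i, (p i - q i) * g i := by
  have hk : Nonempty (Fin k) := by
    by_contra h
    rw [not_nonempty_iff] at h
    rw [Finset.univ_eq_empty, Finset.sum_empty] at hps
    norm_num at hps
  set Z := ∑ l, p l * Real.exp (-(g l)) with hZ
  have hZpos : 0 < Z := Finset.sum_pos (fun i _ => mul_pos (hp i) (Real.exp_pos _))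
    Finset.univ_nonempty
  have hqpos : ∀ i, 0 < q i := fun i => by
    rw [hq i]; exact div_pos (mul_pos (hp i) (Real.exp_pos _)) hZpos
  have hqs : ∑ i, q i = 1 := by
    simp only [hq]
    rw [← Finset.sum_div, div_eq_one_iff_eq (ne_of_gt hZpos)]
  refine ⟨hqpos, hqs, ?_⟩
  have hlog : ∀ i, Real.log (q i) - Real.log (p i) = -(g i) - Real.log Z := by
    intro i
    rw [hq i, Real.log_div (ne_of_gt (mul_pos (hp i) (Real.exp_pos _))) (ne_of_gt hZpos),
      Real.log_mul (ne_of_gt (hp i)) (ne_of_gt (Real.exp_pos _)), Real.log_exp]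
    ring
  calc ∑ i, (q i - p i) * (Real.log (q i) - Real.log (p i))
      = ∑ i, ((p i - q i) * g i + (p i - q i) * Real.log Z) := by
        apply Finset.sum_congr rfl; intro i _; rw [hlog i]; ring
    _ = ∑ i, (p i - q i) * g i + (∑ i, (p i - q i)) * Real.log Z := by
        rw [Finset.sum_add_distrib, Finset.sum_mul]
    _ = ∑ i, (p i - q i) * g i := by
        rw [Finset.sum_sub_distrib, hps, hqs]; ring

open Matrix

lemma md_quad {k N : ℕ} (D : Matrix (Fin k) (Fin N) ℝ) (A : Matrix (Fin N) (Fin N) ℝ) :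
    ∑ i, ∑ j, D i j * (D * A) i j ≤
      Real.sqrt (∑ i, ∑ j, (A i j) ^ 2) * ∑ i, ∑ j, (D i j) ^ 2 := by
  classical
  set u : Fin N → ℝ := fun j => Real.sqrt (∑ i, (D i j) ^ 2) with hu
  have hu_nn : ∀ j, 0 ≤ u j := fun j => Real.sqrt_nonneg _
  have hu_sq : ∀ j, (u j) ^ 2 = ∑ i, (D i j) ^ 2 := fun j =>
    Real.sq_sqrt (Finset.sum_nonneg fun i _ => sq_nonneg _)
  -- rearrange LHS
  have hLHS : ∑ i, ∑ j, D i j * (D * A) i j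
      = ∑ j, ∑ j', A j' j * (∑ i, D i j * D i j') := by
    simp only [Matrix.mul_apply, Finset.mul_sum]
    rw [Finset.sum_comm]
    apply Finset.sum_congr rfl; intro j _
    rw [Finset.sum_comm]
    apply Finset.sum_congr rfl; intro j' _
    apply Finset.sum_congr rfl; intro i _; ring
  -- columnwise Cauchy-Schwarz
  have hcs : ∀ j j' : Fin N, A j' j * (∑ i, D i j * D i j') ≤ |A j' j| * (u j' * u j) := by
    intro j j'
    have h1 : (∑ i, D i j * D i j') ^ 2 ≤ (u j * u j') ^ 2 := by
      rw [mul_pow, hu_sq, hu_sq]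
      exact Finset.sum_mul_sq_le_sq_mul_sq _ _ _
    have h2 : |∑ i, D i j * D i j'| ≤ u j' * u j := by
      rw [← Real.sqrt_sq_eq_abs]
      calc Real.sqrt ((∑ i, D i j * D i j') ^ 2) ≤ Real.sqrt ((u j * u j') ^ 2) :=
            Real.sqrt_le_sqrt h1
        _ = u j * u j' := Real.sqrt_sq (mul_nonneg (hu_nn j) (hu_nn j'))
        _ = u j' * u j := mul_comm _ _
    calc A j' j * (∑ i, D i j * D i j') ≤ |A j' j * (∑ i, D i j * D i j')| := le_abs_self _
      _ = |A j' j| * |∑ i, D i j * D i j'| := abs_mul _ _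
      _ ≤ |A j' j| * (u j' * u j) := mul_le_mul_of_nonneg_left h2 (abs_nonneg _)
  -- global Cauchy-Schwarz over pairs
  have key2 : ∑ j, ∑ j', |A j' j| * (u j' * u j)
      ≤ Real.sqrt (∑ i, ∑ j, (A i j) ^ 2) * ∑ j, (u j) ^ 2 := by
    have hfg : ∑ x : Fin N × Fin N, (|A x.2 x.1|) * (u x.2 * u x.1)
        = ∑ j, ∑ j', |A j' j| * (u j' * u j) := by
      rw [Fintype.sum_prod_type]
    have hf2 : ∑ x : Fin N × Fin N, (|A x.2 x.1|) ^ 2 = ∑ i, ∑ j, (A i j) ^ 2 := by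
      rw [Fintype.sum_prod_type]
      rw [Finset.sum_comm]
      simp [sq_abs]
    have hg2 : ∑ x : Fin N × Fin N, (u x.2 * u x.1) ^ 2 = (∑ j, (u j) ^ 2) ^ 2 := by
      rw [Fintype.sum_prod_type]
      rw [sq, Finset.sum_mul_sum]
      apply Finset.sum_congr rfl; intro a _
      apply Finset.sum_congr rfl; intro b _; ring
    have hcs2 := Finset.sum_mul_sq_le_sq_mul_sq (Finset.univ : Finset (Fin N × Fin N))
      (fun x => |A x.2 x.1|) (fun x => u x.2 * u x.1)
    simp only [hf2, hg2] at hcs2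
    have hnn : 0 ≤ ∑ x : Fin N × Fin N, (|A x.2 x.1|) * (u x.2 * u x.1) :=
      Finset.sum_nonneg fun x _ => mul_nonneg (abs_nonneg _) (mul_nonneg (hu_nn _) (hu_nn _))
    have hA_nn : 0 ≤ ∑ i, ∑ j, (A i j) ^ 2 :=
      Finset.sum_nonneg fun i _ => Finset.sum_nonneg fun j _ => sq_nonneg _
    have hu2_nn : 0 ≤ ∑ j, (u j) ^ 2 := Finset.sum_nonneg fun j _ => sq_nonneg _
    have hfinal : ∑ x : Fin N × Fin N, (|A x.2 x.1|) * (u x.2 * u x.1)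
        ≤ Real.sqrt (∑ i, ∑ j, (A i j) ^ 2) * ∑ j, (u j) ^ 2 := by
      rw [← Real.sqrt_sq hnn]
      calc Real.sqrt ((∑ x : Fin N × Fin N, (|A x.2 x.1|) * (u x.2 * u x.1)) ^ 2)
          ≤ Real.sqrt ((∑ i, ∑ j, (A i j) ^ 2) * (∑ j, (u j) ^ 2) ^ 2) :=
            Real.sqrt_le_sqrt hcs2
        _ = Real.sqrt (∑ i, ∑ j, (A i j) ^ 2) * Real.sqrt ((∑ j, (u j) ^ 2) ^ 2) :=
            Real.sqrt_mul hA_nn _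
        _ = Real.sqrt (∑ i, ∑ j, (A i j) ^ 2) * ∑ j, (u j) ^ 2 := by
            rw [Real.sqrt_sq hu2_nn]
    rw [← hfg]; exact hfinal
  calc ∑ i, ∑ j, D i j * (D * A) i j
      = ∑ j, ∑ j', A j' j * (∑ i, D i j * D i j') := hLHS
    _ ≤ ∑ j, ∑ j', |A j' j| * (u j' * u j) :=
        Finset.sum_le_sum fun j _ => Finset.sum_le_sum fun j' _ => hcs j j'
    _ ≤ Real.sqrt (∑ i, ∑ j, (A i j) ^ 2) * ∑ j, (u j) ^ 2 := key2
    _ = Real.sqrt (∑ i, ∑ j, (A i j) ^ 2) * ∑ i, ∑ j, (D i j) ^ 2 := by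
        congr 1
        rw [Finset.sum_comm]
        apply Finset.sum_congr rfl; intro j _
        exact hu_sq j
open Matrix

lemma md_sym {k N : ℕ} (U V : Matrix (Fin k) (Fin N) ℝ) (A : Matrix (Fin N) (Fin N) ℝ)
    (hA : ∀ a b, A a b = A b a) :
    ∑ i, ∑ j, U i j * (V * A) i j = ∑ i, ∑ j, V i j * (U * A) i j := by
  simp only [Matrix.mul_apply, Finset.mul_sum]
  apply Finset.sum_congr rfl; intro i _
  rw [Finset.sum_comm]
  apply Finset.sum_congr rfl; intro a _
  apply Finset.sum_congr rfl; intro b _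
  rw [hA a b]; ring

lemma md_expand {k N : ℕ} (P Q : Matrix (Fin k) (Fin N) ℝ) (A : Matrix (Fin N) (Fin N) ℝ)
    (hA : ∀ a b, A a b = A b a) :
    ∑ i, ∑ j, Q i j * (Q * A) i j
      = ∑ i, ∑ j, P i j * (P * A) i j
        + 2 * ∑ i, ∑ j, (Q - P) i j * (P * A) i j
        + ∑ i, ∑ j, (Q - P) i j * ((Q - P) * A) i j := by
  have hsym := md_sym P (Q - P) A hA
  have h1 : Q * A = P * A + (Q - P) * A := by
    rw [← Matrix.add_mul]; congr 1; abel
  have hkey : ∀ (i : Fin k) (j : Fin N), Q i j * (Q * A) i j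
      = P i j * (P * A) i j + P i j * ((Q - P) * A) i j
        + ((Q - P) i j * (P * A) i j + (Q - P) i j * ((Q - P) * A) i j) := by
    intro i j
    rw [h1, Matrix.add_apply, Matrix.sub_apply]
    ring
  calc ∑ i, ∑ j, Q i j * (Q * A) i j
      = ∑ i, ∑ j, (P i j * (P * A) i j + P i j * ((Q - P) * A) i j
          + ((Q - P) i j * (P * A) i j + (Q - P) i j * ((Q - P) * A) i j)) := by
        apply Finset.sum_congr rfl; intro i _
        apply Finset.sum_congr rfl; intro j _
        exact hkey i j
    _ = ∑ i, ∑ j, P i j * (P * A) i j + ∑ i, ∑ j, P i j * ((Q - P) * A) i j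
        + (∑ i, ∑ j, (Q - P) i j * (P * A) i j
          + ∑ i, ∑ j, (Q - P) i j * ((Q - P) * A) i j) := by
        simp only [Finset.sum_add_distrib]
    _ = _ := by rw [hsym]; ring

lemma md_rearrange {k N : ℕ} (U V : Matrix (Fin k) (Fin N) ℝ) (M : Matrix (Fin N) (Fin N) ℝ) :
    ∑ i, ∑ j, U i j * (V * M) i j = ∑ j', ∑ j, M j' j * (∑ i, U i j * V i j') := by
  calc ∑ i, ∑ j, U i j * (V * M) i j
      = ∑ i, ∑ j, ∑ j', U i j * (V i j' * M j' j) := by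
        simp only [Matrix.mul_apply, Finset.mul_sum]
    _ = ∑ i, ∑ j', ∑ j, U i j * (V i j' * M j' j) := by
        apply Finset.sum_congr rfl; intro i _
        rw [Finset.sum_comm]
    _ = ∑ j', ∑ i, ∑ j, U i j * (V i j' * M j' j) := Finset.sum_comm
    _ = ∑ j', ∑ j, ∑ i, U i j * (V i j' * M j' j) := by
        apply Finset.sum_congr rfl; intro j' _
        rw [Finset.sum_comm]
    _ = ∑ j', ∑ j, M j' j * (∑ i, U i j * V i j') := by
        apply Finset.sum_congr rfl; intro j' _
        apply Finset.sum_congr rfl; intro j _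
        rw [Finset.mul_sum]
        apply Finset.sum_congr rfl; intro i _; ring


/-- **Convergence rate of mirror descent for the penalized Min-k-Partition problem.**
Let `W` be a symmetric real `N×N` matrix with nonnegative entries, `ρ > 0`,
`L = ‖2W − ρI‖_F`, step sizes `t_m = 1/(L + m + 1)`. Let `X⁰ ∈ Δ_k^N` be entrywise
strictly positive, and define `(X^m)` by the entrywise multiplicative-weights update.
Then every `X^m` lies in `Δ_k^N` with all entries strictly positive, and for every
`T ≥ 1`, `min_{0 ≤ m ≤ T−1} KL(X^{m+1}, X^m) ≤ (2‖W‖_{1,1} + ρN)/(T(T+1))`. -/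
theorem mirror_descent_convergence_rate (k N : ℕ) (W : Matrix (Fin N) (Fin N) ℝ)
    (hW : W.IsSymm) (hWnn : ∀ i j, 0 ≤ W i j) (ρ : ℝ) (hρ : 0 < ρ)
    (L : ℝ)
    (hL : L = Real.sqrt (∑ i, ∑ j,
        (((2 : ℝ) • W - ρ • (1 : Matrix (Fin N) (Fin N) ℝ)) i j) ^ 2))
    (t : ℕ → ℝ) (htm : ∀ m, t m = 1 / (L + m + 1))
    (X : ℕ → Matrix (Fin k) (Fin N) ℝ)
    (hpos0 : ∀ i j, 0 < X 0 i j) (hcol0 : ∀ j, ∑ i, X 0 i j = 1)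
    (hrec : ∀ m i j, X (m + 1) i j =
      X m i j * Real.exp (-(t m) *
          (X m * ((2 : ℝ) • W - ρ • (1 : Matrix (Fin N) (Fin N) ℝ))) i j)
        / ∑ p, X m p j * Real.exp (-(t m) *
          (X m * ((2 : ℝ) • W - ρ • (1 : Matrix (Fin N) (Fin N) ℝ))) p j)) :
    (∀ m, (∀ i j, 0 < X m i j) ∧ ∀ j, ∑ i, X m i j = 1) ∧
      ∀ T : ℕ, ∀ hT : 1 ≤ T,
        (Finset.range T).inf' (Finset.nonempty_range_iff.mpr (by omega))
            (fun m => ∑ i, ∑ j, X (m + 1) i j * Real.log (X (m + 1) i j / X m i j))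
          ≤ (2 * (∑ i, ∑ j, |W i j|) + ρ * N) / (T * (T + 1)) := by
  classical
  set A : Matrix (Fin N) (Fin N) ℝ := (2 : ℝ) • W - ρ • (1 : Matrix (Fin N) (Fin N) ℝ)
    with hA_def
  have hAsymm : ∀ a b : Fin N, A a b = A b a := by
    intro a b
    simp only [hA_def, Matrix.sub_apply, Matrix.smul_apply, Matrix.one_apply, smul_eq_mul]
    rw [hW.apply a b]
    by_cases h : a = b
    · subst h; rfl
    · rw [if_neg h, if_neg (fun hh => h hh.symm)]
  have hL0 : 0 ≤ L := hL ▸ Real.sqrt_nonneg _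
  have hLA : Real.sqrt (∑ i, ∑ j, (A i j) ^ 2) = L := hL.symm
  have hden : ∀ m : ℕ, (0:ℝ) < L + m + 1 := by
    intro m; positivity
  have htpos : ∀ m : ℕ, 0 < t m := by
    intro m; rw [htm m]; positivity
  have ht1 : ∀ m : ℕ, t m * (L + m + 1) = 1 := by
    intro m; rw [htm m]; field_simp
  -- invariance
  have hinv : ∀ m, (∀ i j, 0 < X m i j) ∧ (∀ j, ∑ i, X m i j = 1) := by
    intro m
    induction m with
    | zero => exact ⟨hpos0, hcol0⟩
    | succ m ih =>
      have key : ∀ j : Fin N, (∀ i, 0 < X (m + 1) i j) ∧ (∑ i, X (m + 1) i j = 1) ∧ _ :=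
        fun j => md_update (fun i => X m i j) (fun i => t m * (X m * A) i j)
          (fun i => X (m + 1) i j) (fun i => ih.1 i j) (ih.2 j)
          (fun i => by simpa only [neg_mul] using hrec m i j)
      exact ⟨fun i j => (key j).1 i, fun j => (key j).2.1⟩
  -- entries at most one
  have hle1 : ∀ m i j, X m i j ≤ 1 := by
    intro m i j
    calc X m i j ≤ ∑ i', X m i' j :=
          Finset.single_le_sum (fun i' _ => ((hinv m).1 i' j).le) (Finset.mem_univ i)
      _ = 1 := (hinv m).2 j
  set KL : ℕ → ℝ := fun m => ∑ i, ∑ j, X (m + 1) i j *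
    (Real.log (X (m + 1) i j) - Real.log (X m i j)) with hKL_def
  set S : ℕ → ℝ := fun m => ∑ i, ∑ j, (X (m + 1) i j - X m i j) *
    (Real.log (X (m + 1) i j) - Real.log (X m i j)) with hS_def
  set F : ℕ → ℝ := fun m => ∑ i, ∑ j, X m i j * (X m * A) i j with hF_def
  have hKL_eq : ∀ m, (∑ i, ∑ j, X (m + 1) i j * Real.log (X (m + 1) i j / X m i j)) = KL m := by
    intro m
    apply Finset.sum_congr rfl; intro i _
    apply Finset.sum_congr rfl; intro j _
    rw [Real.log_div (ne_of_gt ((hinv (m + 1)).1 i j)) (ne_of_gt ((hinv m).1 i j))]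
  -- squared norm bounded by symmetric divergence
  have hDsq : ∀ m, ∑ i, ∑ j, (X (m + 1) i j - X m i j) ^ 2 ≤ S m := by
    intro m
    apply Finset.sum_le_sum; intro i _
    apply Finset.sum_le_sum; intro j _
    exact md_sq_le ((hinv (m + 1)).1 i j) (hle1 (m + 1) i j) ((hinv m).1 i j) (hle1 m i j)
  have hSnn : ∀ m, 0 ≤ S m := by
    intro m
    refine le_trans ?_ (hDsq m)
    positivity
  -- KL ≤ S via Gibbs
  have hKL_le_S : ∀ m, KL m ≤ S m := by
    intro m
    have hgibbs : 0 ≤ ∑ j, ∑ i, X m i j * (Real.log (X m i j) - Real.log (X (m + 1) i j)) := by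
      apply Finset.sum_nonneg; intro j _
      exact md_gibbs (fun i => X m i j) (fun i => X (m + 1) i j)
        (fun i => (hinv m).1 i j) (fun i => (hinv (m + 1)).1 i j)
        ((hinv m).2 j) ((hinv (m + 1)).2 j)
    have hsplit : S m = KL m +
        ∑ j, ∑ i, X m i j * (Real.log (X m i j) - Real.log (X (m + 1) i j)) := by
      rw [hS_def, hKL_def]
      simp only
      rw [Finset.sum_comm (f := fun j i => X m i j *
        (Real.log (X m i j) - Real.log (X (m + 1) i j)))]
      rw [← Finset.sum_add_distrib]
      apply Finset.sum_congr rfl; intro i _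
      rw [← Finset.sum_add_distrib]
      apply Finset.sum_congr rfl; intro j _
      ring
    linarith
  -- gradient identity
  have hgrad : ∀ m, ∑ i, ∑ j, (X (m + 1) i j - X m i j) * (X m * A) i j
      = -((L + m + 1) * S m) := by
    intro m
    have hcol : ∀ j : Fin N, ∑ i, (X (m + 1) i j - X m i j) *
        (Real.log (X (m + 1) i j) - Real.log (X m i j))
        = ∑ i, (X m i j - X (m + 1) i j) * (t m * (X m * A) i j) := by
      intro j
      exact (md_update (fun i => X m i j) (fun i => t m * (X m * A) i j)
        (fun i => X (m + 1) i j) (fun i => (hinv m).1 i j) ((hinv m).2 j)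
        (fun i => by simpa only [neg_mul] using hrec m i j)).2.2
    set B := ∑ i, ∑ j, (X (m + 1) i j - X m i j) * (X m * A) i j with hB_def
    have h1 : S m = -(t m * B) := by
      rw [hS_def, hB_def]
      simp only
      rw [Finset.sum_comm (f := fun i j => (X (m + 1) i j - X m i j) *
        (Real.log (X (m + 1) i j) - Real.log (X m i j)))]
      calc ∑ j, ∑ i, (X (m + 1) i j - X m i j) *
            (Real.log (X (m + 1) i j) - Real.log (X m i j))
          = ∑ j, ∑ i, (X m i j - X (m + 1) i j) * (t m * (X m * A) i j) := by
            apply Finset.sum_congr rfl; intro j _; exact hcol j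
        _ = ∑ j, ∑ i, -(t m * ((X (m + 1) i j - X m i j) * (X m * A) i j)) := by
            apply Finset.sum_congr rfl; intro j _
            apply Finset.sum_congr rfl; intro i _; ring
        _ = -(t m * ∑ j, ∑ i, (X (m + 1) i j - X m i j) * (X m * A) i j) := by
            rw [Finset.mul_sum, ← Finset.sum_neg_distrib]
            apply Finset.sum_congr rfl; intro j _
            rw [Finset.mul_sum, ← Finset.sum_neg_distrib]
        _ = -(t m * ∑ i, ∑ j, (X (m + 1) i j - X m i j) * (X m * A) i j) := by
            rw [Finset.sum_comm (f := fun j i => (X (m + 1) i j - X m i j) * (X m * A) i j)]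
    have ht := ht1 m
    linear_combination (L + (m:ℝ) + 1) * h1 - B * ht
  -- one-step descent
  have hstep : ∀ m : ℕ, 2 * ((m:ℝ) + 1) * KL m ≤ F m - F (m + 1) := by
    intro m
    have hexp := md_expand (X m) (X (m + 1)) A hAsymm
    have hquad := md_quad (X (m + 1) - X m) A
    simp only [Matrix.sub_apply] at hexp hquad
    rw [hLA] at hquad
    have hmul : L * (∑ i, ∑ j, (X (m + 1) i j - X m i j) ^ 2) ≤ L * S m :=
      mul_le_mul_of_nonneg_left (hDsq m) hL0
    have hg := hgrad m
    have hK := hKL_le_S m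
    have hSm := hSnn m
    have hFm1 : F (m + 1) = F m + 2 * ∑ i, ∑ j, (X (m + 1) i j - X m i j) * (X m * A) i j
        + ∑ i, ∑ j, (X (m + 1) i j - X m i j) * ((X (m + 1) - X m) * A) i j := by
      rw [hF_def]; exact hexp
    have hmnn : (0:ℝ) ≤ (m:ℝ) := Nat.cast_nonneg m
    nlinarith [hquad, hmul, mul_le_mul_of_nonneg_left hK (by positivity : (0:ℝ) ≤ 2 * ((m:ℝ) + 1)), mul_nonneg hmnn hSm]
  -- telescoping
  have htel : ∀ T : ℕ, ∑ m ∈ Finset.range T, 2 * ((m:ℝ) + 1) * KL m ≤ F 0 - F T := by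
    intro T
    calc ∑ m ∈ Finset.range T, 2 * ((m:ℝ) + 1) * KL m
        ≤ ∑ m ∈ Finset.range T, (F m - F (m + 1)) :=
          Finset.sum_le_sum fun m _ => hstep m
      _ = F 0 - F T := Finset.sum_range_sub' F T
  -- bounds on F
  have hXW_nn : ∀ m, 0 ≤ ∑ i, ∑ j, X m i j * (X m * W) i j := by
    intro m
    apply Finset.sum_nonneg; intro i _
    apply Finset.sum_nonneg; intro j _
    apply mul_nonneg ((hinv m).1 i j).le
    rw [Matrix.mul_apply]
    exact Finset.sum_nonneg fun j' _ => mul_nonneg ((hinv m).1 i j').le (hWnn j' j)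
  have hXW_le : ∀ m, ∑ i, ∑ j, X m i j * (X m * W) i j ≤ ∑ i, ∑ j, |W i j| := by
    intro m
    rw [md_rearrange (X m) (X m) W]
    apply Finset.sum_le_sum; intro j' _
    apply Finset.sum_le_sum; intro j _
    have hc0 : 0 ≤ ∑ i, X m i j * X m i j' :=
      Finset.sum_nonneg fun i _ => mul_nonneg ((hinv m).1 i j).le ((hinv m).1 i j').le
    have hc1 : ∑ i, X m i j * X m i j' ≤ 1 := by
      calc ∑ i, X m i j * X m i j' ≤ ∑ i, X m i j := by
            apply Finset.sum_le_sum; intro i _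
            exact mul_le_of_le_one_right ((hinv m).1 i j).le (hle1 m i j')
        _ = 1 := (hinv m).2 j
    calc W j' j * (∑ i, X m i j * X m i j') ≤ W j' j * 1 :=
          mul_le_mul_of_nonneg_left hc1 (hWnn j' j)
      _ = |W j' j| := by rw [mul_one, abs_of_nonneg (hWnn j' j)]
  have hF2 : ∀ m, F m = 2 * (∑ i, ∑ j, X m i j * (X m * W) i j)
      - ρ * ∑ i, ∑ j, (X m i j) ^ 2 := by
    intro m
    have hXA : X m * A = (2 : ℝ) • (X m * W) - ρ • (X m) := by
      rw [hA_def, Matrix.mul_sub, Matrix.mul_smul, Matrix.mul_smul, Matrix.mul_one]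
    rw [hF_def]
    simp only [hXA, Matrix.sub_apply, Matrix.smul_apply, smul_eq_mul]
    rw [Finset.mul_sum, Finset.mul_sum, ← Finset.sum_sub_distrib]
    apply Finset.sum_congr rfl; intro i _
    rw [Finset.mul_sum, Finset.mul_sum, ← Finset.sum_sub_distrib]
    apply Finset.sum_congr rfl; intro j _
    ring
  have hsq_nn : ∀ m, 0 ≤ ∑ i, ∑ j, (X m i j) ^ 2 := by
    intro m; positivity
  have hsq_le : ∀ m, ∑ i, ∑ j, (X m i j) ^ 2 ≤ (N:ℝ) := by
    intro m
    rw [Finset.sum_comm (f := fun i (j : Fin N) => (X m i j) ^ 2)]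
    calc ∑ j, ∑ i, (X m i j) ^ 2 ≤ ∑ j : Fin N, (1:ℝ) := by
          apply Finset.sum_le_sum; intro j _
          calc ∑ i, (X m i j) ^ 2 ≤ ∑ i, X m i j := by
                apply Finset.sum_le_sum; intro i _
                nlinarith [(hinv m).1 i j, hle1 m i j]
            _ = 1 := (hinv m).2 j
      _ = (N:ℝ) := by simp
  have hFbound : ∀ T : ℕ, F 0 - F T ≤ 2 * (∑ i, ∑ j, |W i j|) + ρ * N := by
    intro T
    have h0 := hF2 0
    have hT := hF2 T
    have h1 := hXW_le 0
    have h2 := hXW_nn T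
    have h3 := hsq_le T
    have h4 := hsq_nn 0
    nlinarith [mul_le_mul_of_nonneg_left h3 hρ.le, mul_nonneg hρ.le h4]
  -- conclusion
  refine ⟨hinv, ?_⟩
  intro T hT
  have hTpos : (0:ℝ) < (T:ℝ) * ((T:ℝ) + 1) := by
    have : (1:ℝ) ≤ (T:ℝ) := by exact_mod_cast hT
    nlinarith
  rw [le_div_iff₀ hTpos]
  set μ := (Finset.range T).inf' (Finset.nonempty_range_iff.mpr (by omega))
      (fun m => ∑ i, ∑ j, X (m + 1) i j * Real.log (X (m + 1) i j / X m i j)) with hμ_def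
  have hgauss : ∀ n : ℕ, ∑ m ∈ Finset.range n, (2 * ((m:ℝ) + 1)) = (n:ℝ) * ((n:ℝ) + 1) := by
    intro n
    induction n with
    | zero => simp
    | succ n ih => rw [Finset.sum_range_succ, ih]; push_cast; ring
  calc μ * ((T:ℝ) * ((T:ℝ) + 1)) = ∑ m ∈ Finset.range T, (2 * ((m:ℝ) + 1)) * μ := by
        rw [← Finset.sum_mul, hgauss T]; ring
    _ ≤ ∑ m ∈ Finset.range T, 2 * ((m:ℝ) + 1) * KL m := by
        apply Finset.sum_le_sum; intro m hm
        have hμm : μ ≤ ∑ i, ∑ j, X (m + 1) i j * Real.log (X (m + 1) i j / X m i j) :=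
          Finset.inf'_le _ hm
        rw [hKL_eq m] at hμm
        exact mul_le_mul_of_nonneg_left hμm (by positivity)
    _ ≤ F 0 - F T := htel T
    _ ≤ 2 * (∑ i, ∑ j, |W i j|) + ρ * N := hFbound T
end
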